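/- arXiv:1602.08545 — 7 statements merged into one kernel-verified Lean document; each statement's English description precedes it below -/
import Mathlib

section
/- Let P(q) = ∑_{j=0}^n q^j a_j be a quaternionic polynomial of degree n (so a_n ≠ 0). Then max_{|q| ≤ 1} |P'(q)| ≤ n · max_{|q| ≤ 1} |P(q)|. -/
/-!
For a complex polynomial `p` of degree `≤ n` and `|ζ| = 1`,
`2π ζ p'(ζ) = ∫₀^{2π} F(t) e^{int} p(ζ e^{-it}) dt` with `F(t) = |∑_{k<n} e^{ikt}|² ≥ 0` and
`∫₀^{2π} F = 2πn`; hence `|p'| ≤ n max |p|` on the unit circle, and on the disc by the maximum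
modulus principle.

Every quaternion lies on a slice `ℝ + ℝJ ≅ ℂ` with `J` a pure unit. Left multiplication by the
slice makes `ℍ` a complex vector space, on which `x ↦ (⟪x, 1⟫, ⟪x, J⟫)` is a complex-linear
functional of norm `1`. Applied to `P(·) P'(q)̄` on the slice, it gives a complex polynomial of
degree `≤ n`, bounded by `max |P| · |P'(q)|` on the disc, whose derivative over `q` is `|P'(q)|²`.
-/

open Quaternion Finset Polynomial Real Complex ComplexConjugate

section FejerKernel

theorem integral_exp_int_mul_I (m : ℤ) :
    ∫ t in (0 : ℝ)..2 * π, cexp (m * t * I) = (if m = 0 then 2 * π else 0 : ℂ) := by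
  split_ifs with hm
  · simp [hm]
  · have hc : (m : ℂ) * I ≠ 0 := mul_ne_zero (Int.cast_ne_zero.2 hm) I_ne_zero
    simp_rw [mul_right_comm _ _ I]
    rw [integral_exp_mul_complex hc]
    push_cast
    rw [show (m : ℂ) * I * (2 * π) = m * (2 * π * I) by ring, exp_int_mul_two_pi_mul_I]
    simp

theorem integral_sum_exp_int_mul_I {ι : Type*} (s : Finset ι) (m : ι → ℤ) :
    ∫ t in (0 : ℝ)..2 * π, ∑ i ∈ s, cexp (m i * t * I) = 2 * π * #{i ∈ s | m i = 0} := by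
  rw [intervalIntegral.integral_finsetSum fun i _ =>
    (by fun_prop : Continuous _).intervalIntegrable _ _]
  simp only [integral_exp_int_mul_I]
  rw [sum_ite, sum_const_zero, add_zero, sum_const, nsmul_eq_mul, mul_comm]

theorem card_filter_add_eq_add {n j : ℕ} (hj : j ≤ n) :
    #{x ∈ range n ×ˢ range n | x.1 + n = x.2 + j} = j := by
  refine (card_nbij' (t := range j) Prod.fst (fun k => (k, k + n - j)) ?_ ?_ ?_ ?_).trans
    (card_range j) <;> intro x hx <;>
    simp only [coe_filter, coe_range, mem_product, mem_range, Set.mem_ofPred_eq, Set.mem_Iio,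
      Prod.ext_iff, true_and] at hx ⊢ <;> omega

/-- `n` times the Fejér kernel of order `n`. -/
noncomputable def fejerKernel (n : ℕ) (t : ℝ) : ℝ :=
  Complex.normSq (∑ k ∈ range n, cexp (k * t * I))

theorem fejerKernel_nonneg (n : ℕ) (t : ℝ) : 0 ≤ fejerKernel n t :=
  Complex.normSq_nonneg _

@[fun_prop]
theorem continuous_fejerKernel (n : ℕ) : Continuous (fejerKernel n) :=
  Complex.continuous_normSq.comp (by fun_prop)

theorem fejerKernel_mul_exp (n j : ℕ) (t : ℝ) :
    (fejerKernel n t : ℂ) * cexp (((n : ℤ) - j : ℤ) * t * I) =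
      ∑ x ∈ range n ×ˢ range n, cexp ((((x.1 + n : ℕ) : ℤ) - (x.2 + j : ℕ) : ℤ) * t * I) := by
  rw [fejerKernel, ← mul_conj, map_sum, sum_mul_sum, ← sum_product', sum_mul]
  refine sum_congr rfl fun x _ => ?_
  rw [← exp_conj, ← Complex.exp_add, ← Complex.exp_add]
  congr 1
  simp only [map_mul, conj_ofReal, conj_I, conj_natCast]
  push_cast
  ring

theorem integral_fejerKernel_mul_exp {n j : ℕ} (hj : j ≤ n) :
    ∫ t in (0 : ℝ)..2 * π, (fejerKernel n t : ℂ) * cexp (((n : ℤ) - j : ℤ) * t * I) =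
      2 * π * j := by
  simp_rw [fejerKernel_mul_exp, integral_sum_exp_int_mul_I, sub_eq_zero, Nat.cast_inj,
    card_filter_add_eq_add hj]

theorem integral_fejerKernel (n : ℕ) : ∫ t in (0 : ℝ)..2 * π, fejerKernel n t = 2 * π * n := by
  have h := integral_fejerKernel_mul_exp (le_refl n)
  simp only [sub_self, Int.cast_zero, zero_mul, Complex.exp_zero, mul_one] at h
  exact_mod_cast intervalIntegral.integral_ofReal.symm.trans h

end FejerKernel

section Bernstein

theorem Polynomial.mul_derivative_eval_eq_sum_range {R : Type*} [CommSemiring R] {p : R[X]}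
    {n : ℕ} (hp : p.natDegree < n) (x : R) :
    x * p.derivative.eval x = ∑ i ∈ range n, p.coeff i * x ^ i * i := by
  rw [derivative_eval, sum_over_range' p (by simp) n hp, mul_sum]
  refine sum_congr rfl fun i _ => ?_
  cases i with
  | zero => simp
  | succ i => simp only [Nat.add_sub_cancel, pow_succ]; ring

theorem Polynomial.integral_fejerKernel_mul_eval {p : ℂ[X]} {n : ℕ} (hp : p.natDegree ≤ n)
    (ζ : ℂ) :
    ∫ t in (0 : ℝ)..2 * π,
        (fejerKernel n t : ℂ) * cexp (n * t * I) * p.eval (ζ * cexp (-(t * I))) =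
      2 * π * (ζ * p.derivative.eval ζ) := by
  have expand : ∀ t : ℝ,
      (fejerKernel n t : ℂ) * cexp (n * t * I) * p.eval (ζ * cexp (-(t * I))) =
        ∑ i ∈ range (n + 1), p.coeff i * ζ ^ i *
          ((fejerKernel n t : ℂ) * cexp (((n : ℤ) - i : ℤ) * t * I)) := by
    intro t
    rw [eval_eq_sum_range' (Nat.lt_succ_of_le hp), mul_sum]
    refine sum_congr rfl fun i _ => ?_
    rw [mul_pow, ← Complex.exp_nat_mul,
      show (((n : ℤ) - i : ℤ) : ℂ) * t * I = n * t * I + i * -(t * I) by push_cast; ring,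
      Complex.exp_add]
    ring
  simp_rw [expand]
  rw [intervalIntegral.integral_finsetSum fun i _ =>
      (by fun_prop : Continuous _).intervalIntegrable _ _,
    mul_derivative_eval_eq_sum_range (Nat.lt_succ_of_le hp), mul_sum]
  refine sum_congr rfl fun i hi => ?_
  rw [intervalIntegral.integral_const_mul,
    integral_fejerKernel_mul_exp (Nat.lt_succ_iff.1 (mem_range.1 hi))]
  ring

theorem Polynomial.norm_derivative_eval_le_of_norm_eq_one {p : ℂ[X]} {n : ℕ}
    (hp : p.natDegree ≤ n) {M : ℝ} (hM : ∀ z : ℂ, ‖z‖ = 1 → ‖p.eval z‖ ≤ M) {ζ : ℂ}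
    (hζ : ‖ζ‖ = 1) : ‖p.derivative.eval ζ‖ ≤ n * M := by
  have hbound : ∀ t : ℝ, ‖(fejerKernel n t : ℂ) * cexp (n * t * I) *
      p.eval (ζ * cexp (-(t * I)))‖ ≤ fejerKernel n t * M := by
    intro t
    have h1 : ‖cexp (n * t * I)‖ = 1 := by exact_mod_cast norm_exp_ofReal_mul_I (n * t)
    have h2 : ‖ζ * cexp (-(t * I))‖ = 1 := by
      rw [norm_mul, hζ, ← neg_mul, ← ofReal_neg, norm_exp_ofReal_mul_I, one_mul]
    rw [norm_mul, norm_mul, h1, mul_one, norm_real, Real.norm_of_nonneg (fejerKernel_nonneg n t)]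
    exact mul_le_mul_of_nonneg_left (hM _ h2) (fejerKernel_nonneg n t)
  refine le_of_mul_le_mul_left ?_ two_pi_pos
  calc 2 * π * ‖p.derivative.eval ζ‖
      = ‖∫ t in (0 : ℝ)..2 * π,
          (fejerKernel n t : ℂ) * cexp (n * t * I) * p.eval (ζ * cexp (-(t * I)))‖ := by
        rw [integral_fejerKernel_mul_eval hp, norm_mul, norm_mul ζ, hζ, one_mul]
        simp [abs_of_pos Real.pi_pos]
    _ ≤ ∫ t in (0 : ℝ)..2 * π, fejerKernel n t * M :=
        intervalIntegral.norm_integral_le_of_norm_le two_pi_pos.le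
          (Filter.Eventually.of_forall fun t _ => hbound t)
          ((by fun_prop : Continuous _).intervalIntegrable _ _)
    _ = 2 * π * (n * M) := by
        rw [intervalIntegral.integral_mul_const, integral_fejerKernel, mul_assoc]

theorem Polynomial.norm_derivative_eval_le {p : ℂ[X]} {n : ℕ} (hp : p.natDegree ≤ n) {M : ℝ}
    (hM : ∀ z : ℂ, ‖z‖ = 1 → ‖p.eval z‖ ≤ M) {z : ℂ} (hz : ‖z‖ ≤ 1) :
    ‖p.derivative.eval z‖ ≤ n * M := by
  refine Complex.norm_le_of_forall_mem_frontier_norm_le (Metric.isBounded_ball (x := 0) (r := 1))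
    p.derivative.differentiable.diffContOnCl (fun ζ hζ => ?_) ?_
  · rw [frontier_ball 0 one_ne_zero, mem_sphere_zero_iff_norm] at hζ
    exact norm_derivative_eval_le_of_norm_eq_one hp hM hζ
  · rwa [closure_ball 0 one_ne_zero, mem_closedBall_zero_iff]

end Bernstein

section Slice

variable {J : ℍ[ℝ]}

theorem Quaternion.star_liftAux (hJ : J * J = -1) (hJre : J.re = 0) (z : ℂ) :
    star (liftAux J hJ z) = liftAux J hJ (conj z) := by
  simp [star_eq_neg.2 hJre]

theorem Quaternion.norm_liftAux (hJ : J * J = -1) (hJre : J.re = 0) (z : ℂ) :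
    ‖liftAux J hJ z‖ = ‖z‖ := by
  have h : normSq (liftAux J hJ z) = Complex.normSq z := by
    rw [normSq_def, star_liftAux hJ hJre, ← map_mul, mul_conj]
    simp
  rw [normSq_eq_norm_mul_self, Complex.normSq_eq_norm_sq, ← sq] at h
  exact (sq_eq_sq₀ (norm_nonneg _) (norm_nonneg _)).1 h

theorem Quaternion.exists_smul_eq_im (q : ℍ[ℝ]) :
    ∃ J : ℍ[ℝ], J * J = -1 ∧ J.re = 0 ∧ ‖q.im‖ • J = q.im := by
  rcases eq_or_ne q.im 0 with h | h
  · refine ⟨(Complex.I : ℍ[ℝ]), ?_, by simp, by rw [h, norm_zero, zero_smul]⟩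
    rw [← coeComplex_mul, I_mul_I]
    ext <;> simp
  · have hn : ‖q.im‖ ≠ 0 := norm_ne_zero_iff.2 h
    refine ⟨‖q.im‖⁻¹ • q.im, ?_, by simp, by rw [smul_smul, mul_inv_cancel₀ hn, one_smul]⟩
    rw [smul_mul_smul_comm, ← sq q.im, im_sq, normSq_eq_norm_mul_self, smul_neg, smul_coe,
      show ‖q.im‖⁻¹ * ‖q.im‖⁻¹ * (‖q.im‖ * ‖q.im‖) = 1 by field_simp, coe_one]

theorem Quaternion.exists_liftAux_eq (q : ℍ[ℝ]) :
    ∃ (J : ℍ[ℝ]) (hJ : J * J = -1), J.re = 0 ∧ ∃ z : ℂ, liftAux J hJ z = q := by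
  obtain ⟨J, hJ, hJre, hq⟩ := exists_smul_eq_im q
  refine ⟨J, hJ, hJre, ⟨q.re, ‖q.im‖⟩, ?_⟩
  rw [liftAux_apply, hq]
  exact re_add_im q

theorem Quaternion.imI_sq_add_imJ_sq_add_imK_sq (hJ : J * J = -1) (hJre : J.re = 0) :
    J.imI ^ 2 + J.imJ ^ 2 + J.imK ^ 2 = 1 := by
  have := congrArg QuaternionAlgebra.re hJ
  simp only [re_mul, hJre, re_neg, re_one] at this
  linarith

/-- The coordinates `(⟪x, 1⟫, ⟪x, J⟫)` of the orthogonal projection of `x` onto `ℝ + ℝJ`. -/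
noncomputable def Quaternion.sliceCoord (J : ℍ[ℝ]) : ℍ[ℝ] →ₗ[ℝ] ℂ where
  toFun x := ⟨x.re, (x * star J).re⟩
  map_add' x y := by apply Complex.ext <;> simp [add_mul]
  map_smul' r x := by apply Complex.ext <;> simp

@[simp]
theorem Quaternion.sliceCoord_re (x : ℍ[ℝ]) : (sliceCoord J x).re = x.re := rfl

@[simp]
theorem Quaternion.sliceCoord_im (x : ℍ[ℝ]) : (sliceCoord J x).im = (x * star J).re := rfl

theorem Quaternion.sliceCoord_coe (hJre : J.re = 0) (r : ℝ) : sliceCoord J r = r := by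
  apply Complex.ext <;> simp [hJre]

theorem Quaternion.sliceCoord_mul_left (hJ : J * J = -1) (hJre : J.re = 0) (x : ℍ[ℝ]) :
    sliceCoord J (J * x) = I * sliceCoord J x := by
  have hJ1 := imI_sq_add_imJ_sq_add_imK_sq hJ hJre
  apply Complex.ext <;>
    simp only [sliceCoord_re, sliceCoord_im, re_mul, imI_mul, imJ_mul, imK_mul, re_star, imI_star,
      imJ_star, imK_star, hJre, mul_re, mul_im, I_re, I_im]
  · ring
  · linear_combination x.re * hJ1

theorem Quaternion.sliceCoord_liftAux_mul (hJ : J * J = -1) (hJre : J.re = 0) (z : ℂ) (x : ℍ[ℝ]) :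
    sliceCoord J (liftAux J hJ z * x) = z * sliceCoord J x := by
  rw [liftAux_apply, add_mul, Algebra.algebraMap_eq_smul_one, smul_mul_assoc, one_mul,
    smul_mul_assoc, map_add, map_smul, map_smul, sliceCoord_mul_left hJ hJre]
  conv_rhs => rw [← Complex.re_add_im z]
  simp only [real_smul]
  ring

theorem Quaternion.sliceCoord_sum_liftAux_mul (hJ : J * J = -1) (hJre : J.re = 0) {ι : Type*}
    (s : Finset ι) (f : ι → ℂ) (c : ι → ℍ[ℝ]) :
    sliceCoord J (∑ i ∈ s, liftAux J hJ (f i) * c i) = ∑ i ∈ s, f i * sliceCoord J (c i) := by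
  simp only [map_sum, sliceCoord_liftAux_mul hJ hJre]

theorem Quaternion.norm_sliceCoord_le (hJ : J * J = -1) (hJre : J.re = 0) (x : ℍ[ℝ]) :
    ‖sliceCoord J x‖ ≤ ‖x‖ := by
  have hJ1 := imI_sq_add_imJ_sq_add_imK_sq hJ hJre
  rw [← sq_le_sq₀ (norm_nonneg _) (norm_nonneg _), Complex.sq_norm, sq,
    ← normSq_eq_norm_mul_self, normSq_def', Complex.normSq_apply]
  simp only [sliceCoord_re, sliceCoord_im, re_mul, re_star, imI_star, imJ_star, imK_star, hJre]
  -- Cauchy–Schwarz for the vector parts of `x` and `J`, through Lagrange's identity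
  nlinarith [sq_nonneg (J.imI * x.imJ - J.imJ * x.imI),
    sq_nonneg (J.imI * x.imK - J.imK * x.imI), sq_nonneg (J.imJ * x.imK - J.imK * x.imJ)]

noncomputable def Quaternion.slicePolynomial (J : ℍ[ℝ]) (n : ℕ) (a : ℕ → ℍ[ℝ]) (w : ℍ[ℝ]) :
    ℂ[X] :=
  ∑ j ∈ range (n + 1), C (sliceCoord J (a j * w)) * X ^ j

theorem Quaternion.natDegree_slicePolynomial_le (n : ℕ) (a : ℕ → ℍ[ℝ]) (w : ℍ[ℝ]) :
    (slicePolynomial J n a w).natDegree ≤ n :=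
  natDegree_sum_le_of_forall_le _ _ fun _ hj =>
    (natDegree_C_mul_X_pow_le _ _).trans (mem_range_succ_iff.1 hj)

theorem Quaternion.eval_slicePolynomial (hJ : J * J = -1) (hJre : J.re = 0) (n : ℕ)
    (a : ℕ → ℍ[ℝ]) (w : ℍ[ℝ]) (ζ : ℂ) :
    (slicePolynomial J n a w).eval ζ =
      sliceCoord J ((∑ j ∈ range (n + 1), liftAux J hJ ζ ^ j * a j) * w) := by
  simp_rw [sum_mul, mul_assoc, ← map_pow, sliceCoord_sum_liftAux_mul hJ hJre]
  simp only [slicePolynomial, eval_finsetSum, eval_mul, eval_C, eval_pow, eval_X]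
  exact sum_congr rfl fun _ _ => mul_comm _ _

theorem Quaternion.derivative_slicePolynomial_eval (hJ : J * J = -1) (hJre : J.re = 0) (n : ℕ)
    (a : ℕ → ℍ[ℝ]) (w : ℍ[ℝ]) (ζ : ℂ) :
    (slicePolynomial J n a w).derivative.eval ζ =
      sliceCoord J ((∑ j ∈ range (n + 1), liftAux J hJ ζ ^ (j - 1) * (j : ℍ[ℝ]) * a j) * w) := by
  simp_rw [← map_natCast (liftAux J hJ), ← map_pow, ← map_mul, sum_mul, mul_assoc,
    sliceCoord_sum_liftAux_mul hJ hJre]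
  simp only [slicePolynomial, derivative_sum, derivative_C_mul_X_pow, eval_finsetSum, eval_mul,
    eval_C, eval_pow, eval_X]
  exact sum_congr rfl fun _ _ => by ring

theorem Quaternion.norm_sum_pow_mul_derivative_le (n : ℕ) (a : ℕ → ℍ[ℝ]) {M : ℝ}
    (hM : ∀ q : ℍ[ℝ], ‖q‖ ≤ 1 → ‖∑ j ∈ range (n + 1), q ^ j * a j‖ ≤ M) {q : ℍ[ℝ]}
    (hq : ‖q‖ ≤ 1) :
    ‖∑ j ∈ range (n + 1), q ^ (j - 1) * (j : ℍ[ℝ]) * a j‖ ≤ n * M := by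
  obtain ⟨J, hJ, hJre, z, rfl⟩ := exists_liftAux_eq q
  set d := ∑ j ∈ range (n + 1), liftAux J hJ z ^ (j - 1) * (j : ℍ[ℝ]) * a j
  have hbound : ∀ ζ : ℂ, ‖ζ‖ = 1 → ‖(slicePolynomial J n a (star d)).eval ζ‖ ≤ M * ‖d‖ := by
    intro ζ hζ
    rw [eval_slicePolynomial hJ hJre]
    refine (norm_sliceCoord_le hJ hJre _).trans ?_
    rw [norm_mul, norm_star]
    exact mul_le_mul_of_nonneg_right (hM _ (by rw [norm_liftAux hJ hJre, hζ])) (norm_nonneg _)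
  have key : ‖d‖ * ‖d‖ ≤ n * M * ‖d‖ := by
    calc ‖d‖ * ‖d‖ = ‖(slicePolynomial J n a (star d)).derivative.eval z‖ := by
          rw [derivative_slicePolynomial_eval hJ hJre, self_mul_star, sliceCoord_coe hJre,
            normSq_eq_norm_mul_self, norm_real, Real.norm_of_nonneg (mul_self_nonneg _)]
      _ ≤ n * (M * ‖d‖) := norm_derivative_eval_le (natDegree_slicePolynomial_le n a _) hbound
          (by rwa [← norm_liftAux hJ hJre])
      _ = n * M * ‖d‖ := by ring
  rcases (norm_nonneg d).eq_or_lt with hd | hd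
  · rw [← hd]
    exact mul_nonneg n.cast_nonneg ((norm_nonneg _).trans (hM 0 (by simp)))
  · exact le_of_mul_le_mul_right key hd

end Slice

theorem norm_sum_pow_mul_le_of_norm_le_one {R : Type*} [SeminormedRing R] [NormOneClass R]
    (s : Finset ℕ) (a : ℕ → R) {q : R} (hq : ‖q‖ ≤ 1) :
    ‖∑ j ∈ s, q ^ j * a j‖ ≤ ∑ j ∈ s, ‖a j‖ :=
  (norm_sum_le _ _).trans <| sum_le_sum fun _ _ => (norm_mul_le _ _).trans <|
    mul_le_of_le_one_left (norm_nonneg _) ((norm_pow_le _ _).trans (pow_le_one₀ (norm_nonneg _) hq))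

theorem bernstein_quaternion_general (n : ℕ) (a : ℕ → ℍ[ℝ]) :
    sSup {y : ℝ | ∃ q : ℍ[ℝ], ‖q‖ ≤ 1 ∧
        y = ‖∑ j ∈ Finset.range (n + 1), q ^ (j - 1) * (j : ℍ[ℝ]) * a j‖} ≤
      n * sSup {y : ℝ | ∃ q : ℍ[ℝ], ‖q‖ ≤ 1 ∧
        y = ‖∑ j ∈ Finset.range (n + 1), q ^ j * a j‖} := by
  set S := {y : ℝ | ∃ q : ℍ[ℝ], ‖q‖ ≤ 1 ∧ y = ‖∑ j ∈ Finset.range (n + 1), q ^ j * a j‖}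
  have hS : BddAbove S := ⟨_, by
    rintro _ ⟨q, hq, rfl⟩
    exact norm_sum_pow_mul_le_of_norm_le_one _ a hq⟩
  have hM : ∀ q : ℍ[ℝ], ‖q‖ ≤ 1 → ‖∑ j ∈ range (n + 1), q ^ j * a j‖ ≤ sSup S :=
    fun q hq => le_csSup hS ⟨q, hq, rfl⟩
  refine Real.sSup_le ?_ (mul_nonneg n.cast_nonneg ((norm_nonneg _).trans (hM 0 (by simp))))
  rintro _ ⟨q, hq, rfl⟩
  exact Quaternion.norm_sum_pow_mul_derivative_le n a hM hq

/-- **Bernstein inequality** for quaternionic polynomials: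
if `P(q) = ∑_{j=0}^n q^j a_j` has degree `n` (i.e. `a n ≠ 0`), then
`max_{‖q‖ ≤ 1} ‖P'(q)‖ ≤ n * max_{‖q‖ ≤ 1} ‖P(q)‖`, where
`P'(q) = ∑_{j=1}^n q^(j-1) * j * a_j`. -/
theorem bernstein_quaternion (n : ℕ) (a : ℕ → ℍ[ℝ]) (han : a n ≠ 0) :
    sSup {y : ℝ | ∃ q : ℍ[ℝ], ‖q‖ ≤ 1 ∧
        y = ‖∑ j ∈ Finset.range (n + 1), q ^ (j - 1) * (j : ℍ[ℝ]) * a j‖} ≤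
      n * sSup {y : ℝ | ∃ q : ℍ[ℝ], ‖q‖ ≤ 1 ∧
        y = ‖∑ j ∈ Finset.range (n + 1), q ^ j * a j‖} :=
  bernstein_quaternion_general n a
end

section
/- Let P(q) = ∑_{j=0}^n q^j a_j be a quaternionic polynomial of degree n (so a_n ≠ 0). Then for every I ∈ 𝕊, ∫_0^{2π} |P'(e^{Iθ})|² dθ ≤ n² · ∫_0^{2π} |P(e^{Iθ})|² dθ. -/
/-!
The map `θ ↦ e^{Iθ}` is the image of `θ ↦ exp(iθ)` under the `ℝ`-algebra embedding `φ : ℂ → ℍ`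
sending `i` to `I`, and `φ` commutes with conjugation. Since `Re(xy) = Re(yx)`, the `L²` inner
product of `e^{Ijθ} b` and `e^{Ikθ} c` over `[0, 2π]` is `∫ Re(φ(e^{i(j-k)θ}) b c̄)`, which vanishes
for `j ≠ k`. This gives the Parseval identity `∫ |∑ e^{Ijθ} b_j|² = 2π ∑ |b_j|²`; applied to `P`
and to `P'(e^{Iθ}) = ∑_{j<n} e^{Ijθ} (j+1) a_{j+1}`, it reduces the inequality to `(j+1)² ≤ n²`.
-/

open Quaternion Real
open scoped InnerProductSpace

theorem integral_exp_int_mul_mul_I (m : ℤ) :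
    ∫ θ in (0:ℝ)..2 * π, Complex.exp (m * θ * Complex.I) = if m = 0 then 2 * π else 0 := by
  split_ifs with hm
  · simp [hm]
  · have hc : (m * Complex.I : ℂ) ≠ 0 := mul_ne_zero (by exact_mod_cast hm) Complex.I_ne_zero
    simp_rw [mul_right_comm _ _ Complex.I]
    rw [integral_exp_mul_complex hc]
    have : Complex.exp (m * Complex.I * (2 * π)) = 1 := by
      rw [← Complex.exp_int_mul_two_pi_mul_I m]; ring_nf
    simp [this]

theorem Complex.conj_exp_mul_I_pow_mul_exp_mul_I_pow (θ : ℝ) (j k : ℕ) :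
    starRingEnd ℂ (exp (θ * I)) ^ k * exp (θ * I) ^ j = exp (((j - k : ℤ) : ℂ) * θ * I) := by
  rw [← exp_conj, map_mul, conj_ofReal, conj_I, ← exp_nat_mul, ← exp_nat_mul, ← exp_add]
  push_cast
  ring_nf

namespace Quaternion

theorem re_mul_comm {R : Type*} [CommRing R] (a b : ℍ[R]) : (a * b).re = (b * a).re := by
  simp only [re_mul]
  ring

theorem norm_natCast (k : ℕ) : ‖(k : ℍ[ℝ])‖ = k := by
  rw [← coe_natCast, norm_coe, Real.norm_natCast]

theorem re_eq_zero_of_sq_eq_neg_one {u : ℍ[ℝ]} (hu : u ^ 2 = -1) : u.re = 0 := by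
  have hnorm : ‖u‖ = 1 := by
    have h := congrArg norm hu
    rw [norm_pow, norm_neg, norm_one] at h
    exact (pow_eq_one_iff_of_nonneg (norm_nonneg u) two_ne_zero).1 h
  rw [← sq_eq_neg_normSq, hu, normSq_eq_norm_mul_self, hnorm, mul_one, coe_one]

section AlgHomComplex

variable (φ : ℂ →ₐ[ℝ] ℍ[ℝ])

theorem algHom_complex_apply (z : ℂ) : φ z = (z.re : ℍ[ℝ]) + z.im • φ Complex.I := by
  conv_lhs => rw [← Complex.re_add_im z, ← Complex.real_smul]
  rw [map_add, map_smul, ← Complex.coe_algebraMap, φ.commutes]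
  rfl

theorem star_algHom_complex_apply (z : ℂ) : star (φ z) = φ (starRingEnd ℂ z) := by
  have hI : star (φ Complex.I) = -φ Complex.I :=
    star_eq_neg.2 (re_eq_zero_of_sq_eq_neg_one (by rw [← map_pow, Complex.I_sq, map_neg, map_one]))
  rw [algHom_complex_apply φ z, algHom_complex_apply φ (starRingEnd ℂ z), star_add, star_smul, hI,
    star_coe]
  simp

theorem integral_inner_algHom_exp_mul (m : ℤ) (c d : ℍ[ℝ]) :
    ∫ θ in (0:ℝ)..2 * π, ⟪φ (Complex.exp (m * θ * Complex.I)) * c, d⟫_ℝ =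
      if m = 0 then 2 * π * ⟪c, d⟫_ℝ else 0 := by
  let L : ℂ →L[ℝ] ℝ := (innerSL ℝ d).comp
    (LinearMap.toContinuousLinearMap (LinearMap.mulRight ℝ c ∘ₗ φ.toLinearMap))
  have hL := L.intervalIntegral_comp_comm (μ := MeasureTheory.volume)
    (f := fun θ : ℝ => Complex.exp (m * θ * Complex.I)) (a := 0) (b := 2 * π)
    ((by fun_prop : Continuous _).intervalIntegrable _ _)
  simp only [L, ContinuousLinearMap.comp_apply, innerSL_apply_apply,
    LinearMap.coe_toContinuousLinearMap', LinearMap.comp_apply, LinearMap.mulRight_apply,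
    AlgHom.toLinearMap_apply, integral_exp_int_mul_mul_I] at hL
  simp_rw [← real_inner_comm d] at hL
  rw [hL]
  split_ifs
  · rw [show φ ((2 * π : ℝ) : ℂ) = ((2 * π : ℝ) : ℍ[ℝ]) from φ.commutes _, coe_mul_eq_smul,
      real_inner_smul_left]
  · simp

theorem norm_sq_sum_algHom_exp_pow_mul (s : Finset ℕ) (b : ℕ → ℍ[ℝ]) (θ : ℝ) :
    ‖∑ j ∈ s, φ (Complex.exp (θ * Complex.I)) ^ j * b j‖ ^ 2 =
      ∑ j ∈ s, ∑ k ∈ s, ⟪φ (Complex.exp (((j - k : ℤ) : ℂ) * θ * Complex.I)) * b j, b k⟫_ℝ := by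
  rw [← real_inner_self_eq_norm_sq, sum_inner]
  refine Finset.sum_congr rfl fun j _ => ?_
  rw [inner_sum]
  refine Finset.sum_congr rfl fun k _ => ?_
  rw [inner_def, inner_def, star_mul, star_pow, star_algHom_complex_apply,
    ← Complex.conj_exp_mul_I_pow_mul_exp_mul_I_pow, map_mul, map_pow, map_pow, mul_assoc,
    ← mul_assoc (b j), ← mul_assoc, re_mul_comm, ← mul_assoc, ← mul_assoc]

theorem integral_norm_sq_sum_algHom_exp_pow_mul (s : Finset ℕ) (b : ℕ → ℍ[ℝ]) :
    ∫ θ in (0:ℝ)..2 * π, ‖∑ j ∈ s, φ (Complex.exp (θ * Complex.I)) ^ j * b j‖ ^ 2 =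
      2 * π * ∑ j ∈ s, ‖b j‖ ^ 2 := by
  have hφ : Continuous φ := φ.toLinearMap.continuous_of_finiteDimensional
  have hint (m : ℤ) (c d : ℍ[ℝ]) :
      IntervalIntegrable (fun θ : ℝ => ⟪φ (Complex.exp (m * θ * Complex.I)) * c, d⟫_ℝ)
        MeasureTheory.volume 0 (2 * π) :=
    (by fun_prop : Continuous _).intervalIntegrable _ _
  have hsum (j : ℕ) :=
    intervalIntegral.integral_finsetSum (s := s) fun k _ => hint (j - k) (b j) (b k)
  simp_rw [norm_sq_sum_algHom_exp_pow_mul]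
  rw [intervalIntegral.integral_finsetSum fun j _ =>
    (by fun_prop : Continuous _).intervalIntegrable _ _]
  simp_rw [hsum, integral_inner_algHom_exp_mul, sub_eq_zero, Nat.cast_inj, Finset.sum_ite_eq,
    Finset.mul_sum, real_inner_self_eq_norm_sq]
  exact Finset.sum_congr rfl fun j hj => if_pos hj

end AlgHomComplex

end Quaternion

theorem bernstein_L2_quaternion_general (n : ℕ) (a : ℕ → ℍ[ℝ])
    (I : ℍ[ℝ]) (hI : I ^ 2 = -1) :
    (∫ θ in (0:ℝ)..(2 * Real.pi),
        ‖∑ j ∈ Finset.range (n + 1),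
          ((Real.cos θ : ℍ[ℝ]) + Real.sin θ • I) ^ (j - 1) * (j : ℍ[ℝ]) * a j‖ ^ 2) ≤
      (n : ℝ) ^ 2 * ∫ θ in (0:ℝ)..(2 * Real.pi),
        ‖∑ j ∈ Finset.range (n + 1),
          ((Real.cos θ : ℍ[ℝ]) + Real.sin θ • I) ^ j * a j‖ ^ 2 := by
  let φ : ℂ →ₐ[ℝ] ℍ[ℝ] := Complex.liftAux I (by rw [← sq, hI])
  have hexp (θ : ℝ) : (cos θ : ℍ[ℝ]) + sin θ • I = φ (Complex.exp (θ * Complex.I)) := by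
    simp [φ, Complex.liftAux_apply, Complex.exp_ofReal_mul_I_re, Complex.exp_ofReal_mul_I_im]
  -- the `j = 0` term, where `j - 1` truncates to `0`, vanishes because of its factor `j`
  have hderiv (w : ℍ[ℝ]) : ∑ j ∈ Finset.range (n + 1), w ^ (j - 1) * (j : ℍ[ℝ]) * a j =
      ∑ j ∈ Finset.range n, w ^ j * (((j + 1 : ℕ) : ℍ[ℝ]) * a (j + 1)) := by
    rw [Finset.sum_range_succ']
    simp [mul_assoc]
  simp_rw [hderiv, hexp, Quaternion.integral_norm_sq_sum_algHom_exp_pow_mul, norm_mul,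
    Quaternion.norm_natCast, mul_pow]
  rw [Finset.sum_range_succ' (fun j => ‖a j‖ ^ 2)]
  calc 2 * π * ∑ j ∈ Finset.range n, ((j + 1 : ℕ) : ℝ) ^ 2 * ‖a (j + 1)‖ ^ 2
      ≤ 2 * π * ∑ j ∈ Finset.range n, (n : ℝ) ^ 2 * ‖a (j + 1)‖ ^ 2 := by
        gcongr with j hj
        exact Finset.mem_range.1 hj
    _ = (n : ℝ) ^ 2 * (2 * π * ∑ j ∈ Finset.range n, ‖a (j + 1)‖ ^ 2) := by
        rw [← Finset.mul_sum]
        ring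
    _ ≤ (n : ℝ) ^ 2 * (2 * π * (∑ j ∈ Finset.range n, ‖a (j + 1)‖ ^ 2 + ‖a 0‖ ^ 2)) := by
        gcongr
        exact le_add_of_nonneg_right (sq_nonneg _)

/-- `L²` Bernstein inequality on each slice: for a quaternionic polynomial
`P(q) = ∑_{j=0}^n q^j a_j` of degree `n` and any imaginary unit `I`,
`∫_0^{2π} ‖P'(e^{Iθ})‖² dθ ≤ n² ∫_0^{2π} ‖P(e^{Iθ})‖² dθ`. -/
theorem bernstein_L2_quaternion (n : ℕ) (a : ℕ → ℍ[ℝ]) (han : a n ≠ 0)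
    (I : ℍ[ℝ]) (hI : I ^ 2 = -1) :
    (∫ θ in (0:ℝ)..(2 * Real.pi),
        ‖∑ j ∈ Finset.range (n + 1),
          ((Real.cos θ : ℍ[ℝ]) + Real.sin θ • I) ^ (j - 1) * (j : ℍ[ℝ]) * a j‖ ^ 2) ≤
      (n : ℝ) ^ 2 * ∫ θ in (0:ℝ)..(2 * Real.pi),
        ‖∑ j ∈ Finset.range (n + 1),
          ((Real.cos θ : ℍ[ℝ]) + Real.sin θ • I) ^ j * a j‖ ^ 2 :=
  bernstein_L2_quaternion_general n a I hI
end

section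
/- Let P(q) = ∑_{j=0}^n q^j a_j be a quaternionic polynomial of degree n (so a_n ≠ 0). Suppose there exists I ∈ 𝕊 such that every coefficient a_j lies in the plane ℂ_I = {x + yI : x, y ∈ ℝ}, and such that P(z) ≠ 0 for every z ∈ ℂ_I with |z| < 1. Then max_{|q| ≤ 1} |P'(q)| ≤ (n/2) · max_{|q| ≤ 1} |P(q)|. -/
/-!
On the slice `ℂ_I` the polynomial `P` is a complex polynomial `p` of degree at most `n` without
zeros in the open unit disc, so the classical Erdős–Lax argument applies. For `|z| = 1` one has
`Re (z p'(z) / p(z)) = ∑ Re (z / (z - r)) ≤ n / 2`, the sum running over the roots `r`, all of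
modulus at least `1`; this is `|p'(z)| ≤ |n p(z) - z p'(z)|`. Applied to `p - λ` for every
`|λ| > max |p|`, with the argument of `λ` chosen suitably, it gives
`|p'(z)| + |n p(z) - z p'(z)| ≤ n max |p|`, and the maximum principle extends the resulting
bound `|p'| ≤ (n / 2) max |p|` to the disc.

A quaternion `q = x + y J` lies on another slice, and `P(q) = C + J D` with `C, D ∈ ℂ_I`.
Since `|C + J D|² = |C|² + |D|² + 2 ⟪C D̄, J⟫` and `C D̄ ∈ ℂ_I`, this is largest at `J = ± I`,
i.e. `|P(q)| ≤ max (|P(x + y I)|, |P(x - y I)|)`. The same holds for `P'`, so the maximum of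
`|P'|` over the ball is attained on `ℂ_I`.
-/

open Quaternion Polynomial ComplexConjugate

namespace Complex

lemma sq_norm_ofReal_sub (t : ℝ) (w : ℂ) :
    ‖(t : ℂ) - w‖ ^ 2 = ‖w‖ ^ 2 + t * (t - 2 * w.re) := by
  simp only [Complex.sq_norm, normSq_apply, sub_re, sub_im, ofReal_re, ofReal_im]
  ring

lemma re_div_sub_le_half {z r : ℂ} (h : ‖z‖ ≤ ‖r‖) : (z / (z - r)).re ≤ 1 / 2 := by
  rcases eq_or_ne z r with rfl | hzr
  · simp
  have hsub : z - r ≠ 0 := sub_ne_zero.2 hzr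
  have hle : ‖z / (z - r)‖ ≤ ‖((1 : ℝ) : ℂ) - z / (z - r)‖ := by
    rw [ofReal_one, one_sub_div hsub, sub_sub_cancel_left, norm_div, norm_div, norm_neg]
    gcongr
  have := sq_norm_ofReal_sub 1 (z / (z - r))
  nlinarith [norm_nonneg (z / (z - r))]

lemma norm_add_norm_le_of_forall_norm_le {u w : ℂ} {R : ℝ} (huw : ‖u‖ ≤ R + ‖w‖)
    (h : ∀ μ : ℂ, R < ‖μ‖ → ‖w‖ ≤ ‖u - μ‖) : ‖w‖ + ‖u‖ ≤ R := by
  have hu : ‖u‖ ≤ R := by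
    by_contra! hR
    have := h u hR
    rw [sub_self, norm_zero] at this
    linarith
  set v := exp (arg u * I)
  have hv : ‖v‖ = 1 := norm_exp_ofReal_mul_I _
  refine le_of_forall_gt_imp_ge_of_dense fun s hs => ?_
  -- `μ = s v` points in the direction of `u`, so `‖u - μ‖ = s - ‖u‖`.
  have hsv : ‖(s : ℂ) * v‖ = s := by
    rw [norm_mul, hv, mul_one, norm_real, Real.norm_of_nonneg (by linarith [norm_nonneg u])]
  have := h (s * v) (by rwa [hsv])
  rw [← norm_mul_exp_arg_mul_I u, ← sub_mul, norm_mul, hv, mul_one, ← ofReal_sub, norm_real,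
    Real.norm_of_nonpos (by linarith)] at this
  linarith

end Complex

namespace Polynomial

lemma eval_sum_C_mul_X_pow {R : Type*} [CommSemiring R] (s : Finset ℕ) (c : ℕ → R) (w : R) :
    (∑ j ∈ s, C (c j) * X ^ j).eval w = ∑ j ∈ s, w ^ j * c j := by
  simp only [eval_finsetSum, eval_mul, eval_C, eval_pow, eval_X, mul_comm]

lemma eval_derivative_sum_C_mul_X_pow {R : Type*} [CommSemiring R] (s : Finset ℕ)
    (c : ℕ → R) (w : R) :
    (∑ j ∈ s, C (c j) * X ^ j).derivative.eval w = ∑ j ∈ s, w ^ (j - 1) * (j * c j) := by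
  simp only [derivative_sum, derivative_C_mul_X_pow, eval_finsetSum, eval_mul, eval_C, eval_pow,
    eval_X]
  exact Finset.sum_congr rfl fun j _ => by ring

lemma re_mul_eval_derivative_div_le (p : ℂ[X]) {z : ℂ} (hz : p.eval z ≠ 0)
    (hroots : ∀ r ∈ p.roots, ‖z‖ ≤ ‖r‖) :
    (z * p.derivative.eval z / p.eval z).re ≤ p.natDegree / 2 := by
  rw [mul_div_assoc, (IsAlgClosed.splits p).eval_derivative_div_eval_of_ne_zero hz,
    ← Multiset.sum_map_mul_left, ← Complex.coe_reAddGroupHom, map_multiset_sum,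
    Multiset.map_map, ← IsAlgClosed.card_roots_eq_natDegree]
  refine (Multiset.sum_le_card_nsmul _ (1 / 2) fun x hx => ?_).trans_eq ?_
  · obtain ⟨r, hr, rfl⟩ := Multiset.mem_map.1 hx
    rw [Function.comp_apply, Complex.coe_reAddGroupHom, mul_one_div]
    exact Complex.re_div_sub_le_half (hroots r hr)
  · rw [Multiset.card_map, nsmul_eq_mul, mul_one_div]

lemma norm_eval_derivative_le_norm_mul_eval_sub (p : ℂ[X]) {n : ℕ} (hp : p.natDegree ≤ n)
    (hzero : ∀ w : ℂ, ‖w‖ < 1 → p.eval w ≠ 0) {z : ℂ} (hz : ‖z‖ = 1) :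
    ‖p.derivative.eval z‖ ≤ ‖n * p.eval z - z * p.derivative.eval z‖ := by
  by_cases hpz : p.eval z = 0
  · simp [hpz, hz]
  set w := z * p.derivative.eval z / p.eval z
  have hw : w.re ≤ n / 2 := by
    refine (re_mul_eval_derivative_div_le p hpz fun r hr => ?_).trans (by gcongr)
    rw [hz]
    exact not_lt.1 fun h => hzero r h (isRoot_of_mem_roots hr)
  have hwn : ‖w‖ ≤ ‖(n : ℂ) - w‖ := by
    have := Complex.sq_norm_ofReal_sub n w
    rw [Complex.ofReal_natCast] at this
    nlinarith [norm_nonneg w, norm_nonneg ((n : ℂ) - w), (Nat.cast_nonneg n : (0 : ℝ) ≤ n)]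
  have hmul : w * p.eval z = z * p.derivative.eval z := div_mul_cancel₀ _ hpz
  calc ‖p.derivative.eval z‖ = ‖w‖ * ‖p.eval z‖ := by
        rw [← norm_mul, hmul, norm_mul, hz, one_mul]
    _ ≤ ‖(n : ℂ) - w‖ * ‖p.eval z‖ := by gcongr
    _ = ‖n * p.eval z - z * p.derivative.eval z‖ := by rw [← norm_mul, sub_mul, hmul]

theorem erdos_lax_of_norm_eq_one (p : ℂ[X]) {n : ℕ} (hp : p.natDegree ≤ n)
    (hzero : ∀ w : ℂ, ‖w‖ < 1 → p.eval w ≠ 0) {M : ℝ}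
    (hM : ∀ w : ℂ, ‖w‖ ≤ 1 → ‖p.eval w‖ ≤ M) {z : ℂ} (hz : ‖z‖ = 1) :
    ‖p.derivative.eval z‖ ≤ n / 2 * M := by
  rcases Nat.eq_zero_or_pos n with rfl | hn
  · simp [derivative_of_natDegree_zero (Nat.le_zero.1 hp)]
  have hn' : (0 : ℝ) < n := Nat.cast_pos.2 hn
  have hshift : ∀ μ : ℂ, n * M < ‖μ‖ →
      ‖p.derivative.eval z‖ ≤ ‖n * p.eval z - z * p.derivative.eval z - μ‖ := by
    intro μ hμ
    have hc : M < ‖μ / n‖ := by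
      rw [norm_div, Complex.norm_natCast, lt_div_iff₀ hn', mul_comm]
      exact hμ
    have hzero' : ∀ w : ℂ, ‖w‖ < 1 → (p - C (μ / n)).eval w ≠ 0 := by
      intro w hw h
      rw [eval_sub, eval_C, sub_eq_zero] at h
      linarith [h ▸ hM w hw.le]
    have := norm_eval_derivative_le_norm_mul_eval_sub (p - C (μ / n))
      (natDegree_sub_C.trans_le hp) hzero' hz
    rwa [derivative_sub, derivative_C, sub_zero, eval_sub, eval_C, mul_sub,
      mul_div_cancel₀ _ (Nat.cast_ne_zero.2 hn.ne'), sub_right_comm] at this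
  have hu : ‖n * p.eval z - z * p.derivative.eval z‖ ≤ n * M + ‖p.derivative.eval z‖ := by
    refine (norm_sub_le _ _).trans ?_
    rw [norm_mul, norm_mul, hz, one_mul, Complex.norm_natCast]
    gcongr
    exact hM z hz.le
  linarith [Complex.norm_add_norm_le_of_forall_norm_le hu hshift,
    norm_eval_derivative_le_norm_mul_eval_sub p hp hzero hz]

theorem erdos_lax (p : ℂ[X]) {n : ℕ} (hp : p.natDegree ≤ n)
    (hzero : ∀ w : ℂ, ‖w‖ < 1 → p.eval w ≠ 0) {M : ℝ}
    (hM : ∀ w : ℂ, ‖w‖ ≤ 1 → ‖p.eval w‖ ≤ M) {z : ℂ} (hz : ‖z‖ ≤ 1) :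
    ‖p.derivative.eval z‖ ≤ n / 2 * M := by
  refine Complex.norm_le_of_forall_mem_frontier_norm_le (Metric.isBounded_ball (x := 0) (r := 1))
    p.derivative.differentiable.diffContOnCl (fun w hw => ?_) ?_
  · rw [frontier_ball 0 one_ne_zero, mem_sphere_zero_iff_norm] at hw
    exact erdos_lax_of_norm_eq_one p hp hzero hM hw
  · rwa [closure_ball 0 one_ne_zero, mem_closedBall_zero_iff]

end Polynomial

namespace Quaternion

variable {I J : ℍ[ℝ]}

lemma normSq_eq_one_of_sq_eq_neg_one (hJ : J ^ 2 = -1) : normSq J = 1 :=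
  (pow_eq_one_iff_of_nonneg normSq_nonneg two_ne_zero).1 <| by
    rw [← map_pow, hJ, normSq_neg, map_one]

lemma norm_eq_one_of_sq_eq_neg_one (hJ : J ^ 2 = -1) : ‖J‖ = 1 := by
  rw [norm_eq_sqrt_real_inner, inner_self, normSq_eq_one_of_sq_eq_neg_one hJ, Real.sqrt_one]

lemma star_eq_neg_of_sq_eq_neg_one (hJ : J ^ 2 = -1) : star J = -J := by
  have hJ0 : J ≠ 0 := by rintro rfl; norm_num at hJ
  apply mul_left_cancel₀ hJ0
  rw [self_mul_star, normSq_eq_one_of_sq_eq_neg_one hJ, mul_neg, ← sq, hJ, neg_neg, coe_one]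

lemma re_eq_zero_of_sq_eq_neg_one_s6 (hJ : J ^ 2 = -1) : J.re = 0 :=
  star_eq_neg.1 (star_eq_neg_of_sq_eq_neg_one hJ)

lemma sq_eq_neg_one_of_re_eq_zero (hre : J.re = 0) (hJ : normSq J = 1) : J ^ 2 = -1 := by
  rw [sq_eq_neg_normSq.2 hre, hJ, coe_one]

/-- The isomorphism `x + y i ↦ x + y J` of `ℂ` onto the slice `ℂ_J`. -/
noncomputable def sliceEmbedding (J : ℍ[ℝ]) (hJ : J ^ 2 = -1) : ℂ →ₐ[ℝ] ℍ[ℝ] :=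
  Complex.liftAux J (by rwa [← sq])

lemma sliceEmbedding_apply (hJ : J ^ 2 = -1) (z : ℂ) :
    sliceEmbedding J hJ z = z.re + z.im • J :=
  Complex.liftAux_apply _ _ z

lemma sliceEmbedding_neg (hJ : J ^ 2 = -1) (z : ℂ) :
    sliceEmbedding (-J) (by rwa [neg_sq]) z = sliceEmbedding J hJ (conj z) := by
  simp [sliceEmbedding_apply]

lemma star_sliceEmbedding (hJ : J ^ 2 = -1) (z : ℂ) :
    star (sliceEmbedding J hJ z) = sliceEmbedding J hJ (conj z) := by
  simp [sliceEmbedding_apply, star_eq_neg_of_sq_eq_neg_one hJ]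

lemma norm_sliceEmbedding (hJ : J ^ 2 = -1) (z : ℂ) : ‖sliceEmbedding J hJ z‖ = ‖z‖ := by
  rw [norm_eq_sqrt_real_inner, inner_self, normSq_def, star_sliceEmbedding, ← map_mul,
    Complex.mul_conj, sliceEmbedding_apply, Complex.norm_def]
  simp

lemma exists_eq_sliceEmbedding (q : ℍ[ℝ]) :
    ∃ J, ∃ hJ : J ^ 2 = -1, ∃ z : ℂ, q = sliceEmbedding J hJ z := by
  by_cases hq : q.im = 0
  · obtain ⟨i, hi⟩ : ∃ i : ℍ[ℝ], i ^ 2 = -1 :=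
      ⟨_, (by rw [sq]; ext <;> simp : (⟨0, 1, 0, 0⟩ : ℍ[ℝ]) ^ 2 = -1)⟩
    exact ⟨i, hi, q.re, by simpa [sliceEmbedding_apply, hq] using (re_add_im q).symm⟩
  · have hnorm : ‖q.im‖ ≠ 0 := norm_ne_zero_iff.2 hq
    refine ⟨‖q.im‖⁻¹ • q.im, sq_eq_neg_one_of_re_eq_zero (by simp) ?_,
      ⟨q.re, ‖q.im‖⟩, ?_⟩
    · rw [normSq_smul, normSq_eq_norm_mul_self, inv_pow, ← sq,
        inv_mul_cancel₀ (pow_ne_zero 2 hnorm)]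
    · rw [sliceEmbedding_apply, smul_smul, mul_inv_cancel₀ hnorm, one_smul]
      exact (re_add_im q).symm

lemma normSq_add_mul (c d J : ℍ[ℝ]) :
    normSq (c + J * d) = normSq c + normSq J * normSq d + 2 * inner ℝ (c * star d) J := by
  rw [normSq_add, map_mul, star_mul, ← mul_assoc, inner_def]

lemma inner_sliceEmbedding (hI : I ^ 2 = -1) (hJ : J.re = 0) (w : ℂ) :
    inner ℝ (sliceEmbedding I hI w) J = w.im * inner ℝ I J := by
  simp [sliceEmbedding_apply, inner_add_left, real_inner_smul_left, inner_def, hJ]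

theorem norm_add_mul_le_max (hI : I ^ 2 = -1) (hJ : J ^ 2 = -1) (γ δ : ℂ) :
    ‖sliceEmbedding I hI γ + J * sliceEmbedding I hI δ‖ ≤
      max ‖sliceEmbedding I hI γ + I * sliceEmbedding I hI δ‖
        ‖sliceEmbedding I hI γ + -I * sliceEmbedding I hI δ‖ := by
  set c := sliceEmbedding I hI γ
  set d := sliceEmbedding I hI δ
  have hw : c * star d = sliceEmbedding I hI (γ * conj δ) := by
    rw [star_sliceEmbedding, map_mul]
  have hnormSq : ∀ K : ℍ[ℝ], K ^ 2 = -1 → normSq (c + K * d) =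
      normSq c + normSq d + 2 * ((γ * conj δ).im * inner ℝ I K) := fun K hK => by
    rw [normSq_add_mul, normSq_eq_one_of_sq_eq_neg_one hK, one_mul, hw,
      inner_sliceEmbedding hI (re_eq_zero_of_sq_eq_neg_one_s6 hK)]
  have hII : inner ℝ I I = 1 := by rw [inner_self, normSq_eq_one_of_sq_eq_neg_one hI]
  have hIJ : |inner ℝ I J| ≤ 1 := by
    simpa [norm_eq_one_of_sq_eq_neg_one hI, norm_eq_one_of_sq_eq_neg_one hJ] using
      abs_real_inner_le_norm I J
  simp only [norm_eq_sqrt_real_inner (F := ℍ[ℝ]), inner_self]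
  rw [hnormSq J hJ, hnormSq I hI, hnormSq (-I) (by rwa [neg_sq]), inner_neg_right, hII]
  rcases le_total 0 (γ * conj δ).im with h | h
  · exact le_max_of_le_left <| Real.sqrt_le_sqrt <| by nlinarith [abs_le.1 hIJ]
  · exact le_max_of_le_right <| Real.sqrt_le_sqrt <| by nlinarith [abs_le.1 hIJ]

lemma sum_sliceEmbedding_pow_mul {ι : Type*} (hJ : J ^ 2 = -1) (s : Finset ι) (e : ι → ℕ)
    (b : ι → ℍ[ℝ]) (ζ : ℂ) :
    ∑ j ∈ s, sliceEmbedding J hJ ζ ^ e j * b j =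
      ∑ j ∈ s, (ζ ^ e j).re • b j + J * ∑ j ∈ s, (ζ ^ e j).im • b j := by
  rw [Finset.mul_sum, ← Finset.sum_add_distrib]
  refine Finset.sum_congr rfl fun j _ => ?_
  rw [← map_pow, sliceEmbedding_apply, add_mul, coe_mul_eq_smul, smul_mul_assoc, mul_smul_comm]

theorem exists_norm_sum_pow_mul_le {ι : Type*} (hI : I ^ 2 = -1) (s : Finset ι) (e : ι → ℕ)
    (β : ι → ℂ) (q : ℍ[ℝ]) :
    ∃ z : ℂ, ‖z‖ = ‖q‖ ∧
      ‖∑ j ∈ s, q ^ e j * sliceEmbedding I hI (β j)‖ ≤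
        ‖∑ j ∈ s, z ^ e j * β j‖ := by
  obtain ⟨J, hJ, ζ, rfl⟩ := exists_eq_sliceEmbedding q
  have hsplit : ∀ K (hK : K ^ 2 = -1),
      ∑ j ∈ s, sliceEmbedding K hK ζ ^ e j * sliceEmbedding I hI (β j) =
        sliceEmbedding I hI (∑ j ∈ s, (ζ ^ e j).re • β j) +
          K * sliceEmbedding I hI (∑ j ∈ s, (ζ ^ e j).im • β j) := fun K hK => by
    simp only [sum_sliceEmbedding_pow_mul, map_sum, map_smul]
  have hmax := norm_add_mul_le_max hI hJ (∑ j ∈ s, (ζ ^ e j).re • β j)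
    (∑ j ∈ s, (ζ ^ e j).im • β j)
  rw [← hsplit J hJ, ← hsplit I hI, ← hsplit (-I) (by rwa [neg_sq])] at hmax
  simp only [sliceEmbedding_neg hI] at hmax
  rcases le_max_iff.1 hmax with h | h
  · refine ⟨ζ, (norm_sliceEmbedding hJ ζ).symm, ?_⟩
    simpa only [← map_pow, ← map_mul, ← map_sum, norm_sliceEmbedding] using h
  · refine ⟨conj ζ, by rw [Complex.norm_conj, norm_sliceEmbedding hJ], ?_⟩
    simpa only [← map_pow, ← map_mul, ← map_sum, norm_sliceEmbedding] using h

theorem erdos_lax (hI : I ^ 2 = -1) (n : ℕ) (c : ℕ → ℂ)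
    (hzero : ∀ w : ℂ, ‖w‖ < 1 →
      ∑ j ∈ Finset.range (n + 1), sliceEmbedding I hI w ^ j * sliceEmbedding I hI (c j) ≠ 0)
    {M : ℝ} (hM : ∀ w : ℂ, ‖w‖ ≤ 1 →
      ‖∑ j ∈ Finset.range (n + 1), sliceEmbedding I hI w ^ j * sliceEmbedding I hI (c j)‖ ≤ M)
    {q : ℍ[ℝ]} (hq : ‖q‖ ≤ 1) :
    ‖∑ j ∈ Finset.range (n + 1), q ^ (j - 1) * sliceEmbedding I hI (j * c j)‖ ≤
      n / 2 * M := by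
  set p : ℂ[X] := ∑ j ∈ Finset.range (n + 1), C (c j) * X ^ j
  have hp : ∀ w, sliceEmbedding I hI (p.eval w) =
      ∑ j ∈ Finset.range (n + 1), sliceEmbedding I hI w ^ j * sliceEmbedding I hI (c j) := by
    simp only [p, eval_sum_C_mul_X_pow, map_sum, map_mul, map_pow, implies_true]
  have hdeg : p.natDegree ≤ n := natDegree_sum_le_of_forall_le _ _ fun j hj =>
    (natDegree_C_mul_X_pow_le _ _).trans (Finset.mem_range_succ_iff.1 hj)
  have hp0 : ∀ w : ℂ, ‖w‖ < 1 → p.eval w ≠ 0 := fun w hw h =>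
    hzero w hw (by rw [← hp, h, map_zero])
  have hpM : ∀ w : ℂ, ‖w‖ ≤ 1 → ‖p.eval w‖ ≤ M := fun w hw => by
    rw [← norm_sliceEmbedding hI, hp]
    exact hM w hw
  obtain ⟨z, hzq, hz⟩ := exists_norm_sum_pow_mul_le hI (Finset.range (n + 1)) (· - 1)
    (fun j => j * c j) q
  calc _ ≤ ‖p.derivative.eval z‖ := by rwa [eval_derivative_sum_C_mul_X_pow]
    _ ≤ n / 2 * M := Polynomial.erdos_lax p hdeg hp0 hpM (hzq ▸ hq)

end Quaternion

lemma bddAbove_setOf_norm_le_one {E : Type*} [SeminormedAddCommGroup E] [ProperSpace E]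
    {g : E → ℝ} (hg : Continuous g) :
    BddAbove {y : ℝ | ∃ q : E, ‖q‖ ≤ 1 ∧ y = g q} :=
  ((isCompact_closedBall 0 1).bddAbove_image hg.continuousOn).mono <| by
    rintro _ ⟨q, hq, rfl⟩
    exact ⟨q, mem_closedBall_zero_iff.2 hq, rfl⟩

theorem erdos_lax_quaternion_general (n : ℕ) (a : ℕ → ℍ[ℝ])
    (I : ℍ[ℝ]) (hI : I ^ 2 = -1)
    (hcoef : ∀ j ≤ n, ∃ x y : ℝ, a j = (x : ℍ[ℝ]) + y • I)
    (hzero : ∀ z : ℍ[ℝ], (∃ x y : ℝ, z = (x : ℍ[ℝ]) + y • I) → ‖z‖ < 1 →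
        ∑ j ∈ Finset.range (n + 1), z ^ j * a j ≠ 0) :
    sSup {y : ℝ | ∃ q : ℍ[ℝ], ‖q‖ ≤ 1 ∧
        y = ‖∑ j ∈ Finset.range (n + 1), q ^ (j - 1) * (j : ℍ[ℝ]) * a j‖} ≤
      (n : ℝ) / 2 * sSup {y : ℝ | ∃ q : ℍ[ℝ], ‖q‖ ≤ 1 ∧
        y = ‖∑ j ∈ Finset.range (n + 1), q ^ j * a j‖} := by
  choose! x y hxy using hcoef
  have ha : ∀ j ∈ Finset.range (n + 1), a j = sliceEmbedding I hI ⟨x j, y j⟩ :=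
    fun j hj => by rw [hxy j (Finset.mem_range_succ_iff.1 hj), sliceEmbedding_apply]
  have hP : ∀ q : ℍ[ℝ], ∑ j ∈ Finset.range (n + 1), q ^ j * a j =
      ∑ j ∈ Finset.range (n + 1), q ^ j * sliceEmbedding I hI ⟨x j, y j⟩ := fun q =>
    Finset.sum_congr rfl fun j hj => by rw [ha j hj]
  have hbdd := bddAbove_setOf_norm_le_one (E := ℍ[ℝ])
    (g := fun q => ‖∑ j ∈ Finset.range (n + 1), q ^ j * a j‖) (by fun_prop)
  refine Real.sSup_le ?_ (mul_nonneg (by positivity) (Real.sSup_nonneg ?_))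
  · rintro _ ⟨q, hq, rfl⟩
    have hP' : ∑ j ∈ Finset.range (n + 1), q ^ (j - 1) * (j : ℍ[ℝ]) * a j =
        ∑ j ∈ Finset.range (n + 1), q ^ (j - 1) * sliceEmbedding I hI (j * ⟨x j, y j⟩) :=
      Finset.sum_congr rfl fun j hj => by rw [mul_assoc, ha j hj, map_mul, map_natCast]
    rw [hP']
    refine Quaternion.erdos_lax hI n _ (fun w hw => ?_) (fun w hw => ?_) hq
    · rw [← hP]
      exact hzero _ ⟨w.re, w.im, sliceEmbedding_apply hI w⟩ (by rwa [norm_sliceEmbedding])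
    · rw [← hP]
      exact le_csSup hbdd ⟨_, by rwa [norm_sliceEmbedding], rfl⟩
  · rintro _ ⟨q, -, rfl⟩
    exact norm_nonneg _

/-- **Erdős–Lax inequality** for a subclass of quaternionic polynomials:
if all coefficients of `P(q) = ∑_{j=0}^n q^j a_j` (of degree `n`) lie in a slice
`ℂ_I = {x + yI}` for some imaginary unit `I`, and `P` has no zero in the open unit
disk of that slice, then `max_{‖q‖ ≤ 1} ‖P'(q)‖ ≤ (n/2) * max_{‖q‖ ≤ 1} ‖P(q)‖`. -/
theorem erdos_lax_quaternion (n : ℕ) (a : ℕ → ℍ[ℝ]) (han : a n ≠ 0)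
    (I : ℍ[ℝ]) (hI : I ^ 2 = -1)
    (hcoef : ∀ j ≤ n, ∃ x y : ℝ, a j = (x : ℍ[ℝ]) + y • I)
    (hzero : ∀ z : ℍ[ℝ], (∃ x y : ℝ, z = (x : ℍ[ℝ]) + y • I) → ‖z‖ < 1 →
        ∑ j ∈ Finset.range (n + 1), z ^ j * a j ≠ 0) :
    sSup {y : ℝ | ∃ q : ℍ[ℝ], ‖q‖ ≤ 1 ∧
        y = ‖∑ j ∈ Finset.range (n + 1), q ^ (j - 1) * (j : ℍ[ℝ]) * a j‖} ≤
      (n : ℝ) / 2 * sSup {y : ℝ | ∃ q : ℍ[ℝ], ‖q‖ ≤ 1 ∧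
        y = ‖∑ j ∈ Finset.range (n + 1), q ^ j * a j‖} :=
  erdos_lax_quaternion_general n a I hI hcoef hzero
end

section
/- Let p(z) = (z - z_1)(z - z_2)⋯(z - z_n) be a monic complex polynomial (n ≥ 1) all of whose roots z_1, …, z_n lie in the open unit disk 𝔻 = {z ∈ ℂ : |z| < 1}. Then for every a ∈ ℂ with |a| = 1 one has |p'(a)/p(a)| > n/2. -/
/-!
Since `p'/p = ∑ 1/(X - zᵢ)`, multiplying `p'(a)/p(a)` by `a` (which does not change its modulus)
gives `∑ a/(a - zᵢ)`. Each term is `1/(1 - w)` with `w = zᵢ/a` in the unit disk, and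
`w ↦ 1/(1 - w)` maps the unit disk into the half-plane `Re > 1/2`; so the real part of the sum,
and hence its modulus, exceeds `n/2`.
-/

open Polynomial

theorem eval_derivative_prod_X_sub_C_div_eval {K ι : Type*} [Field K] (s : Finset ι) (z : ι → K)
    {a : K} (ha : ∀ i ∈ s, a ≠ z i) :
    (derivative (∏ i ∈ s, (X - C (z i)))).eval a / (∏ i ∈ s, (X - C (z i))).eval a =
      ∑ i ∈ s, (a - z i)⁻¹ := by
  classical
  have hfac : ∀ i ∈ s, a - z i ≠ 0 := fun i hi => sub_ne_zero.2 (ha i hi)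
  rw [derivative_prod_finset, eval_prod,
    div_eq_iff (Finset.prod_ne_zero_iff.2 (by simpa using hfac)), eval_finsetSum, Finset.sum_mul]
  refine Finset.sum_congr rfl fun i hi => ?_
  simp only [eval_prod, derivative_X_sub_C, eval_sub, eval_X, eval_C, mul_one]
  rw [← Finset.mul_prod_erase s _ hi, inv_mul_cancel_left₀ (hfac i hi)]

-- `Re (a / (a - b)) - 1/2 = (‖a‖² - ‖b‖²) / (2 ‖a - b‖²)`.
theorem Complex.one_half_lt_re_div_sub {a b : ℂ} (hb : ‖b‖ < ‖a‖) : 1 / 2 < (a / (a - b)).re := by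
  have hab : a - b ≠ 0 := sub_ne_zero.2 fun h => hb.ne (by rw [h])
  have hsq : b.re * b.re + b.im * b.im < a.re * a.re + a.im * a.im := by
    simpa only [← Complex.normSq_apply, ← Complex.sq_norm] using
      pow_lt_pow_left₀ hb (norm_nonneg b) two_ne_zero
  rw [Complex.div_re, ← add_div, lt_div_iff₀ (Complex.normSq_pos.2 hab), Complex.normSq_apply]
  simp only [Complex.sub_re, Complex.sub_im]
  nlinarith

/-- If `p(z) = (z - z₁) ⋯ (z - zₙ)` is a monic complex polynomial (`n ≥ 1`) all of
whose roots lie in the open unit disk, then `|p'(a)/p(a)| > n/2` for every `a` on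
the unit circle. -/
theorem abs_deriv_div_self_gt_half_degree (n : ℕ) (hn : 1 ≤ n)
    (z : Fin n → ℂ) (hz : ∀ i, ‖z i‖ < 1)
    (p : Polynomial ℂ) (hp : p = ∏ i, (Polynomial.X - Polynomial.C (z i)))
    (a : ℂ) (ha : ‖a‖ = 1) :
    (n : ℝ) / 2 < ‖p.derivative.eval a / p.eval a‖ := by
  have hza : ∀ i ∈ Finset.univ, a ≠ z i := fun i _ h => (hz i).ne (by rw [← h, ha])
  rw [hp, eval_derivative_prod_X_sub_C_div_eval _ _ hza]
  calc (n : ℝ) / 2 = ∑ _i : Fin n, (1 / 2 : ℝ) := by simp [div_eq_mul_inv]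
    _ < ∑ i, (a / (a - z i)).re :=
        Finset.sum_lt_sum_of_nonempty ⟨⟨0, hn⟩, Finset.mem_univ _⟩ fun i _ =>
          Complex.one_half_lt_re_div_sub (ha ▸ hz i)
    _ = (a * ∑ i, (a - z i)⁻¹).re := by simp only [Finset.mul_sum, Complex.re_sum, div_eq_mul_inv]
    _ ≤ ‖a * ∑ i, (a - z i)⁻¹‖ := Complex.re_le_norm _
    _ = ‖∑ i, (a - z i)⁻¹‖ := by rw [norm_mul, ha, one_mul]
end

section
/- Let P(q) = ∑_{j=0}^n q^j a_j be a quaternionic polynomial with coefficients a_j ∈ ℍ and n ≥ 1. Then for every I ∈ 𝕊 and every θ ∈ ℝ, |P'(e^{Iθ})| ≤ n · max_{φ ∈ [0, 2π]} |P(e^{Iφ})|, where P'(q) = ∑_{j=1}^n q^{j-1} j a_j. -/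
open Quaternion

noncomputable section BernsteinAux

open Real intervalIntegral

/-- the slice circle map -/
def qexp (I : ℍ[ℝ]) (θ : ℝ) : ℍ[ℝ] := (Real.cos θ : ℍ[ℝ]) + Real.sin θ • I

namespace BernsteinAux

variable {I : ℍ[ℝ]}

theorem coe_smul_one (x : ℝ) : (x : ℍ[ℝ]) = x • (1:ℍ[ℝ]) := by
  rw [← Quaternion.algebraMap_def, Algebra.algebraMap_eq_smul_one]

theorem I_re (hI : I ^ 2 = -1) : I.re = 0 := by
  have h1 := congrArg QuaternionAlgebra.re hI
  have h2 := congrArg QuaternionAlgebra.imI hI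
  have h3 := congrArg QuaternionAlgebra.imJ hI
  have h4 := congrArg QuaternionAlgebra.imK hI
  simp [sq, Quaternion.re_mul, Quaternion.imI_mul, Quaternion.imJ_mul,
    Quaternion.imK_mul] at h1 h2 h3 h4
  by_contra h
  have hi : I.imI = 0 := by
    have : I.re * I.imI = 0 := by linarith
    rcases mul_eq_zero.1 this with h' | h' <;> [exact absurd h' h; exact h']
  have hj : I.imJ = 0 := by
    have : I.re * I.imJ = 0 := by linarith
    rcases mul_eq_zero.1 this with h' | h' <;> [exact absurd h' h; exact h']
  have hk : I.imK = 0 := by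
    have : I.re * I.imK = 0 := by linarith
    rcases mul_eq_zero.1 this with h' | h' <;> [exact absurd h' h; exact h']
  rw [hi, hj, hk] at h1; nlinarith

theorem qexp_mul (hI : I ^ 2 = -1) (θ φ : ℝ) : qexp I θ * qexp I φ = qexp I (θ + φ) := by
  have h2 : I * I = -1 := by rw [← sq]; exact hI
  simp only [qexp, add_mul, mul_add, smul_mul_assoc, mul_smul_comm, smul_smul, h2,
    Real.cos_add, Real.sin_add, coe_smul_one, one_mul, mul_one]
  module

theorem qexp_zero : qexp I 0 = 1 := by simp [qexp]

theorem qexp_pow (hI : I ^ 2 = -1) (θ : ℝ) (j : ℕ) : (qexp I θ) ^ j = qexp I (j * θ) := by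
  induction j with
  | zero => simp [qexp_zero]
  | succ m ih =>
    rw [pow_succ, ih, qexp_mul hI]
    congr 1
    push_cast; ring

theorem star_qexp (hI : I ^ 2 = -1) (θ : ℝ) : star (qexp I θ) = qexp I (-θ) := by
  have hneg : star I = -I := Quaternion.star_eq_neg.2 (I_re hI)
  simp [qexp, star_add, Quaternion.star_smul, hneg, Real.cos_neg, Real.sin_neg, ← smul_neg]

theorem qexp_mul_star (hI : I ^ 2 = -1) (θ : ℝ) : qexp I θ * star (qexp I θ) = 1 := by
  rw [star_qexp hI, qexp_mul hI, add_neg_cancel, qexp_zero]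

theorem norm_qexp (hI : I ^ 2 = -1) (θ : ℝ) : ‖qexp I θ‖ = 1 := by
  have h := congrArg norm (qexp_mul_star hI θ)
  rw [norm_mul, Quaternion.norm_star, norm_one] at h
  nlinarith [norm_nonneg (qexp I θ)]

theorem continuous_qexp : Continuous (qexp I) := by
  exact ((Quaternion.continuous_coe).comp Real.continuous_cos).add
    (Real.continuous_sin.smul continuous_const)

theorem qexp_re (hI : I ^ 2 = -1) (θ : ℝ) : (qexp I θ).re = Real.cos θ := by
  simp [qexp, I_re hI]

/-- integral of cos (k φ) over a period -/
theorem integral_cos_int (k : ℤ) :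
    (∫ φ in (0:ℝ)..(2*π), Real.cos (k * φ)) = if k = 0 then 2*π else 0 := by
  rcases eq_or_ne k 0 with hk | hk
  · simp [hk]
  · rw [if_neg hk]
    have hk' : (k:ℝ) ≠ 0 := Int.cast_ne_zero.2 hk
    have h := mul_integral_comp_mul_left (f := Real.cos) (c := (k:ℝ)) (a := 0) (b := 2*π)
    rw [integral_cos] at h
    have h2 : Real.sin ((k:ℝ) * (2*π)) = 0 := by
      have : (k:ℝ) * (2*π) = (2*k : ℤ) * π := by push_cast; ring
      rw [this, Real.sin_int_mul_pi]
    rw [mul_zero, Real.sin_zero, h2, sub_zero] at h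
    exact (mul_eq_zero.1 h).resolve_left hk'

theorem integral_sin_int (k : ℤ) :
    (∫ φ in (0:ℝ)..(2*π), Real.sin (k * φ)) = 0 := by
  rcases eq_or_ne k 0 with hk | hk
  · simp [hk]
  · have hk' : (k:ℝ) ≠ 0 := Int.cast_ne_zero.2 hk
    have h := mul_integral_comp_mul_left (f := Real.sin) (c := (k:ℝ)) (a := 0) (b := 2*π)
    rw [integral_sin] at h
    have h2 : Real.cos ((k:ℝ) * (2*π)) = 1 := by
      exact_mod_cast Real.cos_int_mul_two_pi k
    rw [mul_zero, Real.cos_zero, h2, sub_self] at h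
    exact (mul_eq_zero.1 h).resolve_left hk'

/-- integral of qexp (k φ) over a period -/
theorem integral_qexp_int (k : ℤ) :
    (∫ φ in (0:ℝ)..(2*π), qexp I (k * φ)) = if k = 0 then (2*π) • (1:ℍ[ℝ]) else 0 := by
  have : ∀ φ:ℝ, qexp I (k * φ) = Real.cos (k*φ) • (1:ℍ[ℝ]) + Real.sin (k*φ) • I := by
    intro φ; rw [qexp, coe_smul_one]
  rw [intervalIntegral.integral_congr (g := fun φ => Real.cos (k*φ) • (1:ℍ[ℝ]) + Real.sin (k*φ) • I)
    (fun φ _ => this φ)]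
  rw [intervalIntegral.integral_add
    ((by fun_prop : Continuous fun φ:ℝ => Real.cos ((k:ℝ)*φ) • (1:ℍ[ℝ])).intervalIntegrable _ _)
    ((by fun_prop : Continuous fun φ:ℝ => Real.sin ((k:ℝ)*φ) • I).intervalIntegrable _ _),
    intervalIntegral.integral_smul_const, intervalIntegral.integral_smul_const,
    integral_cos_int, integral_sin_int]
  rcases eq_or_ne k 0 with hk | hk <;> simp [hk]

theorem integral_mul_const_q (f : ℝ → ℍ[ℝ]) (hf : Continuous f) (C : ℍ[ℝ]) (a b : ℝ) :
    (∫ φ in a..b, f φ * C) = (∫ φ in a..b, f φ) * C := by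
  have h := ((ContinuousLinearMap.mul ℝ ℍ[ℝ]).flip C).intervalIntegral_comp_comm
    (μ := MeasureTheory.volume) (a := a) (b := b) (hf.intervalIntegrable a b)
  simpa using h

theorem count_lemma (n j : ℕ) (hj : j ≤ n) (y : ℍ[ℝ]) :
    ∑ p ∈ Finset.range n, ∑ l ∈ Finset.range n,
      (if ((n:ℤ) + p - l - j = 0) then y else 0) = j • y := by
  have h1 : ∀ p l : ℕ, ((n:ℤ) + p - l - j = 0) ↔ (l = n + p - j) := fun p l => by omega
  simp only [h1, Finset.sum_ite_eq', Finset.mem_range]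
  have h2 : ∀ p:ℕ, (n + p - j < n) ↔ p < j := fun p => by omega
  simp only [h2]
  rw [Finset.sum_ite, Finset.sum_const, Finset.sum_const, smul_zero, add_zero]
  congr 1
  rw [show Finset.filter (fun p => p < j) (Finset.range n) = Finset.range j by
    ext p; simp [Finset.mem_range]; omega, Finset.card_range]

theorem cont_aux (c : ℝ) (C : ℍ[ℝ]) : Continuous fun φ : ℝ => qexp I (c*φ) * C :=
  (continuous_qexp.comp (continuous_const.mul continuous_id)).mul continuous_const

theorem integral_term (hI : I ^ 2 = -1) (n j : ℕ) (hj : j ≤ n) (θ : ℝ) (x : ℍ[ℝ]) :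
    (∫ φ in (0:ℝ)..(2*π), qexp I (n*φ) *
      ((∑ p ∈ Finset.range n, qexp I (p*φ)) * star (∑ l ∈ Finset.range n, qexp I (l*φ))) *
      (qexp I (j*(θ-φ)) * x))
    = (2*π*(j:ℝ)) • (qexp I (j*θ) * x) := by
  have hpt : ∀ φ : ℝ, qexp I (n*φ) *
      ((∑ p ∈ Finset.range n, qexp I (p*φ)) * star (∑ l ∈ Finset.range n, qexp I (l*φ))) *
      (qexp I (j*(θ-φ)) * x)
      = ∑ p ∈ Finset.range n, ∑ l ∈ Finset.range n,
          qexp I (((((n:ℤ)+l-p-j) : ℤ):ℝ)*φ) * (qexp I (j*θ) * x) := by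
    intro φ
    rw [star_sum]
    simp only [star_qexp hI]
    simp only [Finset.mul_sum, Finset.sum_mul]
    refine Finset.sum_congr rfl fun p _ => Finset.sum_congr rfl fun l _ => ?_
    rw [← mul_assoc, qexp_mul hI, qexp_mul hI, qexp_mul hI,
      show (n:ℝ)*φ + ((l:ℝ)*φ + -((p:ℝ)*φ)) + (j:ℝ)*(θ-φ)
        = ((((n:ℤ)+l-p-j) : ℤ):ℝ)*φ + (j:ℝ)*θ by push_cast; ring,
      ← qexp_mul hI, mul_assoc]
  rw [intervalIntegral.integral_congr (fun φ _ => hpt φ)]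
  rw [intervalIntegral.integral_finset_sum (fun p _ => ((continuous_finset_sum _
    (fun l _ => cont_aux _ _)).intervalIntegrable _ _))]
  rw [Finset.sum_congr rfl (fun p _ => intervalIntegral.integral_finset_sum
    (fun l _ => ((cont_aux _ _).intervalIntegrable _ _)))]
  have key : ∀ (k : ℤ) (z : ℍ[ℝ]), (∫ φ in (0:ℝ)..(2*π), qexp I ((k:ℝ)*φ) * z)
      = if k = 0 then (2*π) • z else 0 := by
    intro k z
    rw [integral_mul_const_q (fun φ => qexp I ((k:ℝ)*φ))
      (continuous_qexp.comp (continuous_const.mul continuous_id)) z, integral_qexp_int]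
    split_ifs <;> simp [smul_mul_assoc]
  simp only [key]
  rw [Finset.sum_comm, count_lemma n j hj, ← Nat.cast_smul_eq_nsmul ℝ, smul_smul]
  congr 1
  ring

def reAddHom : ℍ[ℝ] →+ ℝ := AddMonoidHom.mk' (fun q => q.re) (fun _ _ => rfl)

/-- Parseval-type: integral of `normSq D` -/
theorem integral_normSq (hI : I ^ 2 = -1) (n : ℕ) :
    (∫ φ in (0:ℝ)..(2*π), normSq (∑ p ∈ Finset.range n, qexp I (p*φ))) = 2*π*n := by
  have hpt : ∀ φ : ℝ, normSq (∑ p ∈ Finset.range n, qexp I (p*φ))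
      = ∑ p ∈ Finset.range n, ∑ l ∈ Finset.range n, Real.cos ((((l:ℤ)-p : ℤ):ℝ)*φ) := by
    intro φ
    rw [Quaternion.normSq_def, star_sum]
    simp only [star_qexp hI]
    simp only [Finset.mul_sum, Finset.sum_mul]
    rw [show ∀ q : ℍ[ℝ], q.re = reAddHom q from fun _ => rfl, map_sum]
    refine Finset.sum_congr rfl fun p _ => ?_
    rw [map_sum]
    refine Finset.sum_congr rfl fun l _ => ?_
    show (qexp I ((l:ℝ)*φ) * qexp I (-((p:ℝ)*φ))).re = _
    rw [qexp_mul hI, show (l:ℝ)*φ + -((p:ℝ)*φ) = (((l:ℤ)-p : ℤ):ℝ)*φ by push_cast; ring,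
      qexp_re hI]
  rw [intervalIntegral.integral_congr (fun φ _ => hpt φ)]
  rw [intervalIntegral.integral_finset_sum (fun p _ => ((continuous_finset_sum _
    (fun l _ => by fun_prop)).intervalIntegrable _ _))]
  rw [Finset.sum_congr rfl (fun p _ => intervalIntegral.integral_finset_sum
    (fun l _ => by apply Continuous.intervalIntegrable; fun_prop))]
  simp only [integral_cos_int, sub_eq_zero, Int.natCast_inj]
  rw [Finset.sum_congr rfl (fun p hp => Finset.sum_ite_eq' (Finset.range n) p (fun _ => 2*π))]
  rw [Finset.sum_congr rfl (fun p hp => if_pos hp), Finset.sum_const, Finset.card_range]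
  simp [nsmul_eq_mul]; ring

/-- the main integral identity -/
theorem main_identity (hI : I ^ 2 = -1) (n : ℕ) (a : ℕ → ℍ[ℝ]) (θ : ℝ) :
    (∫ φ in (0:ℝ)..(2*π), qexp I (n*φ) *
      ((∑ p ∈ Finset.range n, qexp I (p*φ)) * star (∑ l ∈ Finset.range n, qexp I (l*φ))) *
      (∑ j ∈ Finset.range (n+1), qexp I (j*(θ-φ)) * a j))
    = (2*π) • ∑ j ∈ Finset.range (n+1), (j:ℝ) • (qexp I (j*θ) * a j) := by
  have hpt : ∀ φ : ℝ, qexp I (n*φ) *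
      ((∑ p ∈ Finset.range n, qexp I (p*φ)) * star (∑ l ∈ Finset.range n, qexp I (l*φ))) *
      (∑ j ∈ Finset.range (n+1), qexp I (j*(θ-φ)) * a j)
      = ∑ j ∈ Finset.range (n+1), qexp I (n*φ) *
        ((∑ p ∈ Finset.range n, qexp I (p*φ)) * star (∑ l ∈ Finset.range n, qexp I (l*φ))) *
        (qexp I (j*(θ-φ)) * a j) := by
    intro φ; rw [Finset.mul_sum]
  rw [intervalIntegral.integral_congr (fun φ _ => hpt φ)]
  rw [intervalIntegral.integral_finset_sum (fun j _ => by
    apply Continuous.intervalIntegrable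
    exact ((continuous_qexp.comp (continuous_const.mul continuous_id)).mul
      ((continuous_finset_sum _ (fun p _ => continuous_qexp.comp (continuous_const.mul continuous_id))).mul
        (Continuous.star (continuous_finset_sum _ (fun l _ => continuous_qexp.comp (continuous_const.mul continuous_id)))))).mul
      ((continuous_qexp.comp (continuous_const.mul (continuous_const.sub continuous_id))).mul continuous_const))]
  rw [Finset.smul_sum]
  refine Finset.sum_congr rfl fun j hj => ?_
  rw [integral_term hI n j (Finset.mem_range_succ_iff.1 hj) θ (a j), smul_smul]

end BernsteinAux

end BernsteinAux

open BernsteinAux Real in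
/-- Pointwise Bernstein-type bound on a slice circle: for a quaternionic polynomial
`P(q) = ∑_{j=0}^n q^j a_j` with `n ≥ 1`, imaginary unit `I` and `θ ∈ ℝ`,
`‖P'(e^{Iθ})‖ ≤ n * max_{φ ∈ [0, 2π]} ‖P(e^{Iφ})‖`. -/
theorem bernstein_pointwise_slice (n : ℕ) (hn : 1 ≤ n) (a : ℕ → ℍ[ℝ])
    (I : ℍ[ℝ]) (hI : I ^ 2 = -1) (θ : ℝ) :
    ‖∑ j ∈ Finset.range (n + 1),
        ((Real.cos θ : ℍ[ℝ]) + Real.sin θ • I) ^ (j - 1) * (j : ℍ[ℝ]) * a j‖ ≤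
      n * sSup {y : ℝ | ∃ φ ∈ Set.Icc (0:ℝ) (2 * Real.pi),
        y = ‖∑ j ∈ Finset.range (n + 1),
          ((Real.cos φ : ℍ[ℝ]) + Real.sin φ • I) ^ j * a j‖} := by
  have hπ := Real.pi_pos
  set S : Set ℝ := {y : ℝ | ∃ φ ∈ Set.Icc (0:ℝ) (2 * Real.pi),
        y = ‖∑ j ∈ Finset.range (n + 1),
          ((Real.cos φ : ℍ[ℝ]) + Real.sin φ • I) ^ j * a j‖} with hSdef
  set M := sSup S with hMdef
  -- S is the image of a compact interval under a continuous map
  have hSim : S = (fun φ => ‖∑ j ∈ Finset.range (n+1), (qexp I φ)^j * a j‖) ''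
      Set.Icc (0:ℝ) (2*π) := by
    ext y
    simp only [hSdef, Set.mem_setOf_eq, Set.mem_image, qexp, eq_comm]
  have hFcont : Continuous fun φ => ‖∑ j ∈ Finset.range (n+1), (qexp I φ)^j * a j‖ :=
    (continuous_finset_sum _ (fun j _ => (continuous_qexp.pow j).mul continuous_const)).norm
  have hbdd : BddAbove S := hSim ▸ (isCompact_Icc.image hFcont).bddAbove
  have hub : ∀ ψ : ℝ, ‖∑ j ∈ Finset.range (n+1), (qexp I ψ)^j * a j‖ ≤ M := by
    intro ψ
    set k := ⌊ψ/(2*π)⌋ with hk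
    have h0 : qexp I (ψ - k*(2*π)) = qexp I ψ := by
      unfold qexp
      rw [Real.cos_sub_int_mul_two_pi, Real.sin_sub_int_mul_two_pi]
    have hfl := Int.floor_le (ψ/(2*π))
    have hfl2 := Int.lt_floor_add_one (ψ/(2*π))
    have h2π : (0:ℝ) < 2*π := by positivity
    have hmem : ψ - k*(2*π) ∈ Set.Icc (0:ℝ) (2*π) := by
      constructor
      · have := (le_div_iff₀ h2π).1 hfl; rw [hk]; linarith
      · have := (div_lt_iff₀ h2π).1 hfl2; rw [hk]; nlinarith
    apply le_csSup hbdd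
    rw [hSim]
    exact ⟨ψ - k*(2*π), hmem, by simp only [h0]⟩
  -- the trigonometric form of the derivative sum
  set T := ∑ j ∈ Finset.range (n+1), (j:ℝ) • (qexp I (j*θ) * a j) with hTdef
  have hL : qexp I θ * (∑ j ∈ Finset.range (n+1), (qexp I θ)^(j-1) * (j : ℍ[ℝ]) * a j)
      = T := by
    rw [Finset.mul_sum, hTdef]
    refine Finset.sum_congr rfl fun j hj => ?_
    rcases Nat.eq_zero_or_pos j with h0 | h0
    · subst h0; simp
    · rw [← mul_assoc, ← mul_assoc, ← pow_succ', Nat.sub_add_cancel h0,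
        qexp_pow hI, ← Quaternion.coe_natCast, Quaternion.mul_coe_eq_smul,
        smul_mul_assoc]
  have hnormT : ‖∑ j ∈ Finset.range (n+1), (qexp I θ)^(j-1) * (j : ℍ[ℝ]) * a j‖ = ‖T‖ := by
    rw [← hL, norm_mul, norm_qexp hI, one_mul]
  -- the integral bound
  have hid := main_identity hI n a θ
  set D : ℝ → ℍ[ℝ] := fun φ => ∑ p ∈ Finset.range n, qexp I (p*φ) with hDdef
  have hDcont : Continuous D :=
    continuous_finset_sum _ (fun p _ => continuous_qexp.comp (continuous_const.mul continuous_id))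
  have hIntCont : Continuous fun φ => qexp I (n*φ) * (D φ * star (D φ)) *
      (∑ j ∈ Finset.range (n+1), qexp I (j*(θ-φ)) * a j) :=
    ((continuous_qexp.comp (continuous_const.mul continuous_id)).mul
      (hDcont.mul hDcont.star)).mul
      (continuous_finset_sum _ (fun j _ =>
        (continuous_qexp.comp (continuous_const.mul (continuous_const.sub continuous_id))).mul
          continuous_const))
  have hbound : ∀ φ ∈ Set.Icc (0:ℝ) (2*π),
      ‖qexp I (n*φ) * (D φ * star (D φ)) *
        (∑ j ∈ Finset.range (n+1), qexp I (j*(θ-φ)) * a j)‖ ≤ normSq (D φ) * M := by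
    intro φ _
    have hDD : D φ * star (D φ) = ((normSq (D φ) : ℝ) : ℍ[ℝ]) := Quaternion.mul_star_eq_coe _
    rw [norm_mul, norm_mul, hDD, norm_qexp hI, one_mul, Quaternion.norm_coe,
      Real.norm_eq_abs, abs_of_nonneg (Quaternion.normSq_nonneg)]
    have h1 : ‖∑ j ∈ Finset.range (n+1), qexp I (j*(θ-φ)) * a j‖ ≤ M := by
      have : ∀ j : ℕ, qexp I ((j:ℝ)*(θ-φ)) = (qexp I (θ-φ))^j := fun j => (qexp_pow hI _ j).symm
      simp only [this]
      exact hub (θ-φ)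
    exact mul_le_mul_of_nonneg_left h1 (Quaternion.normSq_nonneg)
  have h1 : ‖(2*π) • T‖ ≤ ∫ φ in (0:ℝ)..(2*π), normSq (D φ) * M := by
    rw [← hid]
    refine (intervalIntegral.norm_integral_le_integral_norm (by positivity)).trans ?_
    exact intervalIntegral.integral_mono_on (by positivity)
      (hIntCont.norm.intervalIntegrable _ _)
      (((Quaternion.continuous_normSq.comp hDcont).mul continuous_const).intervalIntegrable _ _)
      hbound
  have h2 : (∫ φ in (0:ℝ)..(2*π), normSq (D φ) * M) = 2*π*n*M := by
    rw [intervalIntegral.integral_mul_const, integral_normSq hI]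
  have h3 : ‖(2*π) • T‖ = 2*π*‖T‖ := by
    rw [norm_smul, Real.norm_eq_abs, abs_of_pos (by positivity)]
  have hTle : ‖T‖ ≤ n*M := by
    have h4 : 2*π*‖T‖ ≤ 2*π*(n*M) := by rw [← h3]; rw [h2] at h1; linarith
    exact le_of_mul_le_mul_left h4 (by positivity)
  calc ‖∑ j ∈ Finset.range (n + 1),
        ((Real.cos θ : ℍ[ℝ]) + Real.sin θ • I) ^ (j - 1) * (j : ℍ[ℝ]) * a j‖
      = ‖T‖ := hnormT
    _ ≤ n * M := hTle
end

section
/- Let P(q) = ∑_{j=0}^n q^j a_j be a quaternionic polynomial with coefficients a_j ∈ ℍ. Then the maximum of |P| over the closed unit ball is attained on the boundary sphere: max_{|q| ≤ 1} |P(q)| = max_{|q| = 1} |P(q)|. -/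
/-!
Every quaternion `q` lies in a slice `ℝ + ℝ u` with `u` an imaginary unit; since `u * u = -1`, this
slice is the isometric image of an embedding `φ : ℂ → ℍ`. Through `φ`, left multiplication makes `ℍ`
a complex normed space in which `z ↦ ∑ φ(z)^j a_j = ∑ z^j • a_j` is a polynomial, hence
holomorphic, so the complex maximum modulus principle on the unit disc bounds `‖P q‖` by the
maximum of `‖P‖` on the unit sphere of `ℍ`.
-/

open Quaternion

theorem RingHom.norm_sum_pow_mul_le_of_forall_norm_eq_one {A : Type*} [NormedRing A]
    (φ : ℂ →+* A) (hφ : ∀ z, ‖φ z‖ ≤ ‖z‖) (n : ℕ) (a : ℕ → A)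
    {C : ℝ} (hC : ∀ w : ℂ, ‖w‖ = 1 → ‖∑ j ∈ Finset.range (n + 1), φ w ^ j * a j‖ ≤ C)
    {z : ℂ} (hz : ‖z‖ ≤ 1) :
    ‖∑ j ∈ Finset.range (n + 1), φ z ^ j * a j‖ ≤ C := by
  let : Module ℂ A := Module.compHom A φ
  let : NormedSpace ℂ A :=
    { norm_smul_le := fun w x => (norm_mul_le (φ w) x).trans (by gcongr; exact hφ w) }
  have hsum : ∀ w : ℂ, ∑ j ∈ Finset.range (n + 1), φ w ^ j * a j =
      ∑ j ∈ Finset.range (n + 1), w ^ j • a j := fun w => by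
    simp only [← map_pow]; rfl
  have hdiff : Differentiable ℂ fun w : ℂ => ∑ j ∈ Finset.range (n + 1), w ^ j • a j := by
    fun_prop
  simp only [hsum] at hC ⊢
  refine Complex.norm_le_of_forall_mem_frontier_norm_le (Metric.isBounded_ball (x := 0) (r := 1))
    hdiff.diffContOnCl (fun w hw => hC w ?_) ?_
  · rwa [frontier_ball 0 one_ne_zero, mem_sphere_zero_iff_norm] at hw
  · rwa [closure_ball 0 one_ne_zero, mem_closedBall_zero_iff]

namespace Quaternion

theorem mul_self_eq_neg_one {u : ℍ[ℝ]} (hre : u.re = 0) (hu : ‖u‖ = 1) : u * u = -1 := by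
  rw [← sq, sq_eq_neg_normSq.mpr hre, normSq_eq_norm_mul_self, hu, mul_one, coe_one]

theorem norm_liftAux_s17 {u : ℍ[ℝ]} (hre : u.re = 0) (hu : ‖u‖ = 1) (z : ℂ) :
    ‖Complex.liftAux u (mul_self_eq_neg_one hre hu) z‖ = ‖z‖ := by
  have hcross : ((z.re : ℍ[ℝ]) * star (z.im • u)).re = 0 := by simp [hre]
  rw [← sq_eq_sq₀ (norm_nonneg _) (norm_nonneg _), sq, ← normSq_eq_norm_mul_self,
    ← Complex.normSq_eq_norm_sq, Complex.liftAux_apply, Complex.normSq_apply, algebraMap_def,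
    normSq_add, normSq_coe, normSq_smul, hcross, normSq_eq_norm_mul_self, hu]
  ring

theorem exists_im_eq_norm_smul (q : ℍ[ℝ]) :
    ∃ u : ℍ[ℝ], u.re = 0 ∧ ‖u‖ = 1 ∧ q.im = ‖q.im‖ • u := by
  by_cases h : q.im = 0
  · refine ⟨show ℍ[ℝ] from ⟨0, 1, 0, 0⟩, rfl, ?_, by rw [h, norm_zero, zero_smul]⟩
    rw [← sq_eq_sq₀ (norm_nonneg _) zero_le_one, sq, ← normSq_eq_norm_mul_self, normSq_def']
    norm_num
  · refine ⟨‖q.im‖⁻¹ • q.im, by simp, ?_, ?_⟩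
    · rw [norm_smul, norm_inv, norm_norm, inv_mul_cancel₀ (norm_ne_zero_iff.mpr h)]
    · rw [smul_smul, mul_inv_cancel₀ (norm_ne_zero_iff.mpr h), one_smul]

theorem norm_sum_pow_mul_le_of_forall_norm_eq_one (n : ℕ) (a : ℕ → ℍ[ℝ]) {C : ℝ}
    (hC : ∀ w : ℍ[ℝ], ‖w‖ = 1 → ‖∑ j ∈ Finset.range (n + 1), w ^ j * a j‖ ≤ C)
    {q : ℍ[ℝ]} (hq : ‖q‖ ≤ 1) :
    ‖∑ j ∈ Finset.range (n + 1), q ^ j * a j‖ ≤ C := by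
  obtain ⟨u, hre, hu, him⟩ := q.exists_im_eq_norm_smul
  set φ := Complex.liftAux u (mul_self_eq_neg_one hre hu)
  have hφ : ∀ z, ‖φ z‖ = ‖z‖ := norm_liftAux_s17 hre hu
  have hφq : φ ⟨q.re, ‖q.im‖⟩ = q := by
    rw [Complex.liftAux_apply, ← him]
    exact re_add_im q
  rw [← hφq] at hq ⊢
  exact (φ : ℂ →+* ℍ[ℝ]).norm_sum_pow_mul_le_of_forall_norm_eq_one (fun z => (hφ z).le) n a
    (fun w hw => hC (φ w) ((hφ w).trans hw)) (by rwa [← hφ])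

end Quaternion

/-- Maximum modulus principle for quaternionic polynomials: the maximum of `‖P‖`
over the closed unit ball is attained on the boundary sphere. -/
theorem max_modulus_on_sphere (n : ℕ) (a : ℕ → ℍ[ℝ]) :
    sSup {y : ℝ | ∃ q : ℍ[ℝ], ‖q‖ ≤ 1 ∧
        y = ‖∑ j ∈ Finset.range (n + 1), q ^ j * a j‖} =
      sSup {y : ℝ | ∃ q : ℍ[ℝ], ‖q‖ = 1 ∧
        y = ‖∑ j ∈ Finset.range (n + 1), q ^ j * a j‖} := by
  have hcont : Continuous fun q : ℍ[ℝ] => ‖∑ j ∈ Finset.range (n + 1), q ^ j * a j‖ := by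
    fun_prop
  obtain ⟨w₀, hw₀, hmax⟩ := (isCompact_sphere (0 : ℍ[ℝ]) 1).exists_isMaxOn
    (NormedSpace.sphere_nonempty.mpr zero_le_one) hcont.continuousOn
  apply csSup_eq_csSup_of_forall_exists_le
  · rintro _ ⟨q, hq, rfl⟩
    exact ⟨_, ⟨w₀, mem_sphere_zero_iff_norm.mp hw₀, rfl⟩,
      norm_sum_pow_mul_le_of_forall_norm_eq_one n a
        (fun w hw => hmax (mem_sphere_zero_iff_norm.mpr hw)) hq⟩
  · rintro _ ⟨q, hq, rfl⟩
    exact ⟨_, ⟨q, hq.le, rfl⟩, le_rfl⟩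
end

section
/- Let P(q) = ∑_{j=0}^n q^j a_j be a quaternionic polynomial and let P^s(q) = ∑_{m=0}^{2n} q^m c_m be its symmetrization, where c_m = ∑_{k=0}^{m} a_k · conj(a_{m-k}) (with a_j = 0 for j > n). Then for every R > 0, max_{|q| = R} |P^s(q)| ≤ ( max_{|q| = R} |P(q)| )². -/
/-!
Every quaternion `q` lies in a complex slice `ℝ[I]` with `I * I = -1`, and the coefficients
`c m` are real. The map `π x = (x - I x I) / 2` projects `ℍ` onto `ℝ[I]` along the quaternions
anticommuting with `I`; it is `ℝ[I]`-linear on both sides and does not increase norms. Applying it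
to `P(q) * conj (P (conj q)) = ∑_{j,k} q^j a_j conj(a_k) q^k`, the factor `q^k` moves to the left
(the values of `π` commute with `ℝ[I]`) and the terms regroup into `P^s(q)`. Hence
`‖P^s(q)‖ ≤ ‖P(q)‖ * ‖P(conj q)‖`, and `conj q` lies on the same sphere as `q`.
-/

open Quaternion Finset

namespace Finset

theorem sum_range_diag_eq_sum_range_sum_range {M : Type*} [AddCommMonoid M] {n : ℕ}
    {g : ℕ → ℕ → M} (hg₁ : ∀ i j, n < i → g i j = 0)
    (hg₂ : ∀ i j, n < j → g i j = 0) :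
    ∑ m ∈ range (2 * n + 1), ∑ k ∈ range (m + 1), g k (m - k) =
      ∑ i ∈ range (n + 1), ∑ j ∈ range (n + 1), g i j := by
  rw [sum_range_diag_flip, eq_comm]
  refine sum_subset_zero_on_sdiff (range_subset_range.2 (by omega)) ?_ fun i hi => ?_
  · intro i hi
    simp only [mem_sdiff, mem_range, not_lt] at hi
    exact sum_eq_zero fun j _ => hg₁ i j (by omega)
  · refine sum_subset (range_subset_range.2 (by have := mem_range.1 hi; omega)) fun j _ hj => ?_
    exact hg₂ i j (by simpa using hj)

end Finset

theorem isSelfAdjoint_sum_range_mul_star_sub {R : Type*} [Semiring R] [StarRing R]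
    (a : ℕ → R) (m : ℕ) :
    IsSelfAdjoint (∑ k ∈ range (m + 1), a k * star (a (m - k))) := by
  rw [IsSelfAdjoint, star_sum, ← sum_range_reflect]
  refine sum_congr rfl fun k hk => ?_
  rw [mem_range] at hk
  rw [star_mul, star_star, Nat.add_sub_cancel, Nat.sub_sub_self (by omega)]

section SlicePart

variable {A : Type*} [Ring A] [Algebra ℝ A] {I w : A}

/-- For `I * I = -1`, the projection onto the centralizer of `I` along the elements anticommuting
with `I`. -/
noncomputable def slicePart (I : A) : A →ₗ[ℝ] A :=
  (2⁻¹ : ℝ) • (LinearMap.id - LinearMap.mulLeft ℝ I ∘ₗ LinearMap.mulRight ℝ I)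

theorem slicePart_apply (I x : A) : slicePart I x = (2⁻¹ : ℝ) • (x - I * x * I) := by
  simp [slicePart, mul_assoc]

theorem slicePart_mul_left (hw : Commute I w) (x : A) :
    slicePart I (w * x) = w * slicePart I x := by
  simp only [slicePart_apply, mul_smul_comm, mul_sub, ← mul_assoc, hw.eq]

theorem slicePart_mul_right (hw : Commute I w) (x : A) :
    slicePart I (x * w) = slicePart I x * w := by
  simp only [slicePart_apply, smul_mul_assoc, sub_mul, mul_assoc, ← hw.eq]

theorem commute_slicePart (hI : I * I = -1) (x : A) : Commute I (slicePart I x) := by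
  have h₁ : I * (I * x * I) = -(x * I) := by rw [← mul_assoc, ← mul_assoc, hI]; simp
  have h₂ : I * x * I * I = -(I * x) := by rw [mul_assoc, hI]; simp
  simp only [Commute, SemiconjBy, slicePart_apply, mul_smul_comm, smul_mul_assoc, mul_sub,
    sub_mul, h₁, h₂, sub_neg_eq_add, add_comm]

theorem slicePart_eq_self (hI : I * I = -1) (hw : Commute I w) : slicePart I w = w := by
  have : I * w * I = -w := by rw [hw.eq, mul_assoc, hI, mul_neg_one]
  rw [slicePart_apply, this, sub_neg_eq_add, ← two_smul ℝ w, smul_smul]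
  norm_num

theorem slicePart_pow_mul_mul_pow (hI : I * I = -1) {q : A} (hq : q ∈ Algebra.adjoin ℝ {I})
    (i j : ℕ) (x : A) : slicePart I (q ^ i * x * q ^ j) = slicePart I (q ^ (i + j) * x) := by
  have hqj : q ^ j ∈ Algebra.adjoin ℝ {I} := pow_mem hq j
  have hIq : Commute I (q ^ j) := Algebra.commute_of_mem_adjoin_self hqj
  have hx : Commute (slicePart I (q ^ i * x)) (q ^ j) :=
    Algebra.commute_of_mem_adjoin_singleton_of_commute hqj (commute_slicePart hI _).symm
  rw [slicePart_mul_right hIq, hx.eq, ← slicePart_mul_left hIq, ← mul_assoc, ← pow_add,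
    add_comm]

end SlicePart

namespace Quaternion

variable {I : ℍ[ℝ]}

theorem norm_eq_one_of_mul_self_eq_neg_one (hI : I * I = -1) : ‖I‖ = 1 := by
  have h : ‖I‖ ^ 2 = 1 := by rw [sq, ← norm_mul, hI, norm_neg, norm_one]
  exact (pow_eq_one_iff_of_nonneg (norm_nonneg I) two_ne_zero).1 h

theorem norm_slicePart_le (hI : I * I = -1) (x : ℍ[ℝ]) : ‖slicePart I x‖ ≤ ‖x‖ := by
  have hI₁ := norm_eq_one_of_mul_self_eq_neg_one hI
  calc ‖slicePart I x‖ ≤ 2⁻¹ * (‖x‖ + ‖I * x * I‖) := by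
        rw [slicePart_apply, norm_smul, Real.norm_of_nonneg (by norm_num)]
        gcongr
        exact norm_sub_le _ _
    _ = ‖x‖ := by rw [norm_mul, norm_mul, hI₁]; ring

theorem commute_of_isSelfAdjoint {c : ℍ[ℝ]} (hc : IsSelfAdjoint c) (x : ℍ[ℝ]) :
    Commute x c := by
  rw [star_eq_self.1 hc]
  exact (coe_commute _ x).symm

theorem exists_mul_self_eq_neg_one_mem_adjoin (q : ℍ[ℝ]) :
    ∃ I : ℍ[ℝ], I * I = -1 ∧ q ∈ Algebra.adjoin ℝ {I} := by
  by_cases him : q.im = 0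
  · have hi : (⟨0, 1, 0, 0⟩ : ℍ[ℝ]) * ⟨0, 1, 0, 0⟩ = -1 := by ext <;> simp
    refine ⟨_, hi, ?_⟩
    rw [← re_add_im q, him, add_zero, ← algebraMap_def]
    exact Subalgebra.algebraMap_mem _ _
  · have hn : ‖q.im‖ ≠ 0 := norm_ne_zero_iff.2 him
    set I := ‖q.im‖⁻¹ • q.im with hI
    refine ⟨I, ?_, ?_⟩
    · rw [hI, smul_mul_smul_comm, ← sq q.im, im_sq, normSq_eq_norm_mul_self, smul_neg,
        ← coe_smul, smul_eq_mul,
        show ‖q.im‖⁻¹ * ‖q.im‖⁻¹ * (‖q.im‖ * ‖q.im‖) = 1 by field_simp, coe_one]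
    · have hq : q = algebraMap ℝ ℍ[ℝ] q.re + ‖q.im‖ • I := by
        rw [hI, smul_smul, mul_inv_cancel₀ hn, one_smul, algebraMap_def, re_add_im]
      rw [hq]
      exact add_mem (Subalgebra.algebraMap_mem _ _)
        (Subalgebra.smul_mem _ (Algebra.self_mem_adjoin_singleton ℝ I) _)

theorem sum_pow_mul_symmetrization_eq_slicePart {n : ℕ} {a : ℕ → ℍ[ℝ]}
    (ha : ∀ j, n < j → a j = 0) {I q : ℍ[ℝ]} (hI : I * I = -1)
    (hq : q ∈ Algebra.adjoin ℝ {I}) :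
    ∑ m ∈ range (2 * n + 1), q ^ m * ∑ k ∈ range (m + 1), a k * star (a (m - k)) =
      slicePart I ((∑ j ∈ range (n + 1), q ^ j * a j) *
        star (∑ j ∈ range (n + 1), star q ^ j * a j)) := by
  set g : ℕ → ℕ → ℍ[ℝ] := fun i j => slicePart I (q ^ (i + j) * (a i * star (a j)))
  have hdiag : ∀ m ∈ range (2 * n + 1), ∑ k ∈ range (m + 1), g k (m - k) =
      q ^ m * ∑ k ∈ range (m + 1), a k * star (a (m - k)) := by
    intro m _
    have hc : Commute I (q ^ m * ∑ k ∈ range (m + 1), a k * star (a (m - k))) :=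
      (Algebra.commute_of_mem_adjoin_self (pow_mem hq m)).mul_right
        (commute_of_isSelfAdjoint (isSelfAdjoint_sum_range_mul_star_sub a m) I)
    rw [← slicePart_eq_self hI hc, mul_sum, map_sum]
    refine sum_congr rfl fun k hk => ?_
    simp only [g, Nat.add_sub_cancel' (Nat.le_of_lt_succ (mem_range.1 hk))]
  have hprod : slicePart I ((∑ j ∈ range (n + 1), q ^ j * a j) *
      star (∑ j ∈ range (n + 1), star q ^ j * a j)) =
      ∑ i ∈ range (n + 1), ∑ j ∈ range (n + 1), g i j := by
    simp only [star_sum, star_mul, star_pow, star_star, sum_mul_sum, map_sum, g,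
      ← slicePart_pow_mul_mul_pow hI hq, mul_assoc]
  rw [hprod, ← sum_range_diag_eq_sum_range_sum_range (fun i j hi => by simp [g, ha i hi])
    (fun i j hj => by simp [g, ha j hj])]
  exact (sum_congr rfl hdiag).symm

end Quaternion

theorem symmetrization_max_le_sq_general (n : ℕ) (a : ℕ → ℍ[ℝ])
    (ha : ∀ j, n < j → a j = 0)
    (c : ℕ → ℍ[ℝ])
    (hc : ∀ m, c m = ∑ k ∈ Finset.range (m + 1), a k * star (a (m - k)))
    (R : ℝ) :
    sSup {y : ℝ | ∃ q : ℍ[ℝ], ‖q‖ = R ∧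
        y = ‖∑ m ∈ Finset.range (2 * n + 1), q ^ m * c m‖} ≤
      (sSup {y : ℝ | ∃ q : ℍ[ℝ], ‖q‖ = R ∧
        y = ‖∑ j ∈ Finset.range (n + 1), q ^ j * a j‖}) ^ 2 := by
  set P : ℍ[ℝ] → ℍ[ℝ] := fun q => ∑ j ∈ range (n + 1), q ^ j * a j
  set M := sSup {y : ℝ | ∃ q : ℍ[ℝ], ‖q‖ = R ∧ y = ‖P q‖}
  have hM : ∀ q : ℍ[ℝ], ‖q‖ = R → ‖P q‖ ≤ M := by
    obtain ⟨C, hC⟩ := (isCompact_sphere (0 : ℍ[ℝ]) R).exists_bound_of_continuousOn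
      (f := P) (by fun_prop)
    refine fun q hq => le_csSup ⟨C, ?_⟩ ⟨q, hq, rfl⟩
    rintro _ ⟨p, hp, rfl⟩
    exact hC p (by simpa using hp)
  refine Real.sSup_le ?_ (sq_nonneg M)
  rintro _ ⟨q, hq, rfl⟩
  obtain ⟨I, hI, hqI⟩ := exists_mul_self_eq_neg_one_mem_adjoin q
  simp only [hc]
  calc ‖∑ m ∈ range (2 * n + 1), q ^ m * ∑ k ∈ range (m + 1), a k * star (a (m - k))‖
      = ‖slicePart I (P q * star (P (star q)))‖ := by
        rw [sum_pow_mul_symmetrization_eq_slicePart ha hI hqI]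
    _ ≤ ‖P q‖ * ‖P (star q)‖ := by
        rw [← Quaternion.norm_star (P (star q)), ← norm_mul]
        exact norm_slicePart_le hI _
    _ ≤ M * M := mul_le_mul (hM q hq) (hM _ (by rw [Quaternion.norm_star, hq]))
        (norm_nonneg _) ((norm_nonneg _).trans (hM q hq))
    _ = M ^ 2 := (sq M).symm

/-- The symmetrization `P^s(q) = ∑_{m=0}^{2n} q^m c_m` of a quaternionic polynomial
`P(q) = ∑_{j=0}^n q^j a_j`, where `c_m = ∑_{k=0}^m a_k * conj(a_{m-k})`
(with `a_j = 0` for `j > n`), satisfies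
`max_{‖q‖ = R} ‖P^s(q)‖ ≤ (max_{‖q‖ = R} ‖P(q)‖)²` for every `R > 0`. -/
theorem symmetrization_max_le_sq (n : ℕ) (a : ℕ → ℍ[ℝ])
    (ha : ∀ j, n < j → a j = 0)
    (c : ℕ → ℍ[ℝ])
    (hc : ∀ m, c m = ∑ k ∈ Finset.range (m + 1), a k * star (a (m - k)))
    (R : ℝ) (hR : 0 < R) :
    sSup {y : ℝ | ∃ q : ℍ[ℝ], ‖q‖ = R ∧
        y = ‖∑ m ∈ Finset.range (2 * n + 1), q ^ m * c m‖} ≤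
      (sSup {y : ℝ | ∃ q : ℍ[ℝ], ‖q‖ = R ∧
        y = ‖∑ j ∈ Finset.range (n + 1), q ^ j * a j‖}) ^ 2 :=
  symmetrization_max_le_sq_general n a ha c hc R
end
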